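/- arXiv:2509.06255 — 12 statements merged into one kernel-verified Lean document; each statement's English description precedes it below -/
import Mathlib

section
/- Let s, s' be nonnegative real numbers, let δ, δ' be complex numbers, and let θ be a real number. Suppose δ = δ' · exp(I·θ) and (s : ℂ) + δ² = ((s' : ℂ) + δ'²) · exp(2·I·θ). Then either (s = 0 and s' = 0 and |δ| = |δ'|), or (s = s' and (δ = δ' or δ = -δ')). -/
theorem stmt_0 (s s' : ℝ) (hs : 0 ≤ s) (hs' : 0 ≤ s')
    (δ δ' : ℂ) (θ : ℝ)
    (h1 : δ = δ' * Complex.exp (Complex.I * θ))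
    (h2 : (s : ℂ) + δ ^ 2 = ((s' : ℂ) + δ' ^ 2) * Complex.exp (2 * Complex.I * θ)) :
    (s = 0 ∧ s' = 0 ∧ ‖δ‖ = ‖δ'‖) ∨
      (s = s' ∧ (δ = δ' ∨ δ = -δ')) := by
  set e := Complex.exp (Complex.I * θ) with he
  have habs_e : ‖e‖ = 1 := by
    rw [he, Complex.norm_exp]
    simp
  have hexp2 : Complex.exp (2 * Complex.I * θ) = e ^ 2 := by
    rw [he, ← Complex.exp_nat_mul]
    ring_nf
  rw [hexp2, h1] at h2
  have key : (s : ℂ) = (s' : ℂ) * e ^ 2 := by linear_combination h2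
  have hss' : s = s' := by
    have := congrArg (‖·‖) key
    simpa [Complex.norm_of_nonneg hs, Complex.norm_of_nonneg hs', habs_e, norm_mul,
      norm_pow, abs_of_nonneg hs, abs_of_nonneg hs'] using this
  rcases eq_or_lt_of_le hs with hz | hpos
  · left
    refine ⟨hz.symm, by rw [← hss', ← hz], ?_⟩
    rw [h1, norm_mul, habs_e, mul_one]
  · right
    refine ⟨hss', ?_⟩
    have hs'pos : (0:ℝ) < s' := hss' ▸ hpos
    have hne : (s' : ℂ) ≠ 0 := by exact_mod_cast hs'pos.ne'
    have he2 : e ^ 2 = 1 := by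
      have h3 : (s' : ℂ) = (s' : ℂ) * e ^ 2 := by rw [← key]; exact_mod_cast hss'.symm
      have := mul_left_cancel₀ hne (h3.symm.trans (mul_one _).symm)
      exact this
    have hfac : (e - 1) * (e + 1) = 0 := by linear_combination he2
    rcases mul_eq_zero.mp hfac with h | h
    · left; rw [h1, sub_eq_zero.mp h, mul_one]
    · right
      have : e = -1 := by linear_combination h
      rw [h1, this]; ring
end

section
/- Let c, d, t be real numbers with c ≥ d > 0, c·d > 1, and t > 1. Define c' = (t·c + 1)/(c + t) and d' = (t·d + 1)/(d + t). Then c' > 0, d' > 0, c' ≥ d', c'·d' − 1 = (t² − 1)·(c·d − 1)/((c + t)·(d + t)) > 0, c' − d' = (t² − 1)·(c − d)/((c + t)·(d + t)), and consequently (c' − d')/(c'·d' − 1) = (c − d)/(c·d − 1). -/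
theorem stmt_1 (c d t : ℝ) (hdc : d ≤ c) (hd : 0 < d) (hcd : 1 < c * d) (ht : 1 < t)
    (c' d' : ℝ)
    (hc' : c' = (t * c + 1) / (c + t)) (hd' : d' = (t * d + 1) / (d + t)) :
    0 < c' ∧ 0 < d' ∧ d' ≤ c' ∧
      (c' * d' - 1 = (t ^ 2 - 1) * (c * d - 1) / ((c + t) * (d + t)) ∧
        0 < c' * d' - 1) ∧
      c' - d' = (t ^ 2 - 1) * (c - d) / ((c + t) * (d + t)) ∧
      (c' - d') / (c' * d' - 1) = (c - d) / (c * d - 1) := by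
  have hc : 0 < c := lt_of_lt_of_le hd hdc
  have hct : 0 < c + t := by linarith
  have hdt : 0 < d + t := by linarith
  have ht2 : 0 < t ^ 2 - 1 := by nlinarith
  have hc'0 : 0 < c' := by
    rw [hc']; apply div_pos; nlinarith; exact hct
  have hd'0 : 0 < d' := by
    rw [hd']; apply div_pos; nlinarith; exact hdt
  have hdiff : c' - d' = (t ^ 2 - 1) * (c - d) / ((c + t) * (d + t)) := by
    rw [hc', hd']; field_simp; ring
  have hprod : c' * d' - 1 = (t ^ 2 - 1) * (c * d - 1) / ((c + t) * (d + t)) := by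
    rw [hc', hd']; field_simp; ring
  have hprodpos : 0 < c' * d' - 1 := by
    rw [hprod]; apply div_pos; nlinarith; positivity
  refine ⟨hc'0, hd'0, ?_, ⟨hprod, hprodpos⟩, hdiff, ?_⟩
  · nlinarith [div_nonneg (by nlinarith : (0:ℝ) ≤ (t ^ 2 - 1) * (c - d)) (le_of_lt (mul_pos hct hdt))]
  · rw [hdiff, hprod, div_div_div_eq]
    have h1 : (0:ℝ) < c * d - 1 := by linarith
    rw [div_eq_div_iff (ne_of_gt (mul_pos (mul_pos hct hdt) (mul_pos ht2 h1))) (ne_of_gt h1)]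
    ring
end

section
/- Let c, d, t, βx, βp be real numbers with c ≥ d > 0, c·d > 1, and t > 1. Define c' = (t·c + 1)/(c + t), d' = (t·d + 1)/(d + t), βx' = √(t² − 1)·βx/(c + t), βp' = √(t² − 1)·βp/(d + t). Then √((d' + 1)/(c' + 1))·βx'/√(c'·d' − 1) = √((d + 1)/(c + 1))·βx/√(c·d − 1) and √((c' + 1)/(d' + 1))·βp'/√(c'·d' − 1) = √((c + 1)/(d + 1))·βp/√(c·d − 1). -/
theorem stmt_2 (c d t βx βp : ℝ) (hdc : d ≤ c) (hd : 0 < d) (hcd : 1 < c * d) (ht : 1 < t)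
    (c' d' βx' βp' : ℝ)
    (hc' : c' = (t * c + 1) / (c + t)) (hd' : d' = (t * d + 1) / (d + t))
    (hβx' : βx' = Real.sqrt (t ^ 2 - 1) * βx / (c + t))
    (hβp' : βp' = Real.sqrt (t ^ 2 - 1) * βp / (d + t)) :
    Real.sqrt ((d' + 1) / (c' + 1)) * βx' / Real.sqrt (c' * d' - 1)
        = Real.sqrt ((d + 1) / (c + 1)) * βx / Real.sqrt (c * d - 1) ∧
    Real.sqrt ((c' + 1) / (d' + 1)) * βp' / Real.sqrt (c' * d' - 1)
        = Real.sqrt ((c + 1) / (d + 1)) * βp / Real.sqrt (c * d - 1) := by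
  have hc : 0 < c := lt_of_lt_of_le hd hdc
  have ht0 : 0 < t := lt_trans one_pos ht
  have ha : 0 < c + t := by linarith
  have hb : 0 < d + t := by linarith
  have ht2 : 0 < t ^ 2 - 1 := by nlinarith
  have hcd1 : 0 < c * d - 1 := by linarith
  have hc1 : 0 < c + 1 := by linarith
  have hd1 : 0 < d + 1 := by linarith
  have h1 : (d' + 1) / (c' + 1) = ((d + 1) / (c + 1)) * ((c + t) / (d + t)) := by
    subst hc' hd'
    rw [div_add' _ _ _ (ne_of_gt hb), div_add' _ _ _ (ne_of_gt ha), div_div_div_eq, div_mul_div_comm]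
    rw [div_eq_div_iff (by positivity) (by positivity)]
    ring
  have h1' : (c' + 1) / (d' + 1) = ((c + 1) / (d + 1)) * ((d + t) / (c + t)) := by
    subst hc' hd'
    rw [div_add' _ _ _ (ne_of_gt ha), div_add' _ _ _ (ne_of_gt hb), div_div_div_eq, div_mul_div_comm]
    rw [div_eq_div_iff (by positivity) (by positivity)]
    ring
  have h2 : c' * d' - 1 = (c * d - 1) * (t ^ 2 - 1) / ((c + t) * (d + t)) := by
    subst hc' hd'
    field_simp
    ring
  have hsa : Real.sqrt (c + t) ≠ 0 := Real.sqrt_ne_zero'.mpr ha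
  have hsb : Real.sqrt (d + t) ≠ 0 := Real.sqrt_ne_zero'.mpr hb
  have hst : Real.sqrt (t ^ 2 - 1) ≠ 0 := Real.sqrt_ne_zero'.mpr ht2
  have hscd : Real.sqrt (c * d - 1) ≠ 0 := Real.sqrt_ne_zero'.mpr hcd1
  have hsc1 : Real.sqrt (c + 1) ≠ 0 := Real.sqrt_ne_zero'.mpr hc1
  have hsd1 : Real.sqrt (d + 1) ≠ 0 := Real.sqrt_ne_zero'.mpr hd1
  have hasq : (c + t) = Real.sqrt (c + t) * Real.sqrt (c + t) :=
    (Real.mul_self_sqrt ha.le).symm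
  have hbsq : (d + t) = Real.sqrt (d + t) * Real.sqrt (d + t) :=
    (Real.mul_self_sqrt hb.le).symm
  rw [h1, h1', h2, hβx', hβp',
    Real.sqrt_mul (by positivity), Real.sqrt_mul (by positivity),
    Real.sqrt_div hd1.le, Real.sqrt_div hc1.le,
    Real.sqrt_div ha.le, Real.sqrt_div hb.le,
    Real.sqrt_div (by positivity), Real.sqrt_mul hcd1.le, Real.sqrt_mul (by positivity)]
  constructor
  · rw [div_eq_div_iff (by positivity) (by positivity)]
    field_simp
    conv_rhs => rw [hasq]
    ring
  · rw [div_eq_div_iff (by positivity) (by positivity)]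
    field_simp
    conv_rhs => rw [hbsq]
    ring
end

section
/- Let c, d, c', d', βx, βp, βx', βp' be real numbers with c ≥ d > 0, c' ≥ d' > 0, c·d > 1, c'·d' > 1. Suppose (c − d)/(c·d − 1) = (c' − d')/(c'·d' − 1), √((d + 1)/(c + 1))·βx/√(c·d − 1) = √((d' + 1)/(c' + 1))·βx'/√(c'·d' − 1), and √((c + 1)/(d + 1))·βp/√(c·d − 1) = √((c' + 1)/(d' + 1))·βp'/√(c'·d' − 1). Then either (c', d', βx', βp') = (c, d, βx, βp), or there exist t ∈ ℝ with (t > 1 or t < −c) and ε ∈ {1, −1} such that c' = (t·c + 1)/(c + t), d' = (t·d + 1)/(d + t), βx' = ε·√(t² − 1)·βx/(c + t), and βp' = ε·√(t² − 1)·βp/(d + t). -/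
lemma sqrt_key (n m n' m' g g' w T b b' : ℝ) (hn : 0 < n) (hm : 0 < m)
    (hn' : 0 < n') (hm' : 0 < m') (hg : 0 < g) (hg' : 0 < g')
    (hw : w ≠ 0) (hT : 0 ≤ T)
    (hrel : n * m' * g' * w ^ 2 = n' * m * g * T)
    (hb : Real.sqrt (n / m) * b / Real.sqrt g
        = Real.sqrt (n' / m') * b' / Real.sqrt g') :
    b' = Real.sqrt T * b / |w| := by
  have harg : n / m / g = n' / m' / g' * (T / w ^ 2) := by
    have hw2 : w ^ 2 ≠ 0 := pow_ne_zero 2 hw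
    field_simp
    linear_combination hrel
  have hA : Real.sqrt (n / m) / Real.sqrt g
      = Real.sqrt (n' / m') / Real.sqrt g' * (Real.sqrt T / |w|) := by
    rw [← Real.sqrt_div (by positivity : (0:ℝ) ≤ n / m) g,
        ← Real.sqrt_div (by positivity : (0:ℝ) ≤ n' / m') g',
        ← Real.sqrt_sq_eq_abs, ← Real.sqrt_div hT (w ^ 2),
        ← Real.sqrt_mul (by positivity), harg]
  have hA' : 0 < Real.sqrt (n' / m') / Real.sqrt g' := by positivity
  have h2 : Real.sqrt (n' / m') / Real.sqrt g' * b'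
      = Real.sqrt (n' / m') / Real.sqrt g' * (Real.sqrt T / |w| * b) := by
    calc Real.sqrt (n' / m') / Real.sqrt g' * b'
        = Real.sqrt (n' / m') * b' / Real.sqrt g' := by ring
      _ = Real.sqrt (n / m) * b / Real.sqrt g := hb.symm
      _ = Real.sqrt (n / m) / Real.sqrt g * b := by ring
      _ = Real.sqrt (n' / m') / Real.sqrt g' * (Real.sqrt T / |w| * b) := by
          rw [hA]; ring
  have h3 := mul_left_cancel₀ hA'.ne' h2
  rw [h3]; ring

lemma lemD (c d c' d' t : ℝ)
    (hsE : (c - d) * (c' * d' - 1) = (c' - d') * (c * d - 1))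
    (hc'p : c' * (c + t) = t * c + 1)
    (hK : (c - d) * (t * c + 1) + (c + t) * (c * d - 1) ≠ 0) :
    d' * (d + t) = t * d + 1 := by
  have hlin : d' * ((c - d) * (t * c + 1) + (c + t) * (c * d - 1))
      = (c - d) * (c + t) + (t * c + 1) * (c * d - 1) := by
    linear_combination (c + t) * hsE - ((c - d) * d' - (c * d - 1)) * hc'p
  have hfac : (d' * (d + t) - (t * d + 1))
      * ((c - d) * (t * c + 1) + (c + t) * (c * d - 1)) = 0 := by
    linear_combination (d + t) * hlin
  rcases mul_eq_zero.mp hfac with h | h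
  · linarith
  · exact absurd h hK

lemma lemA (c d c' d' t : ℝ) (hc'p : c' * (c + t) = t * c + 1)
    (hd'p : d' * (d + t) = t * d + 1) (hdt : d + t ≠ 0) :
    (d + 1) * (c' + 1) * (c' * d' - 1) * (c + t) ^ 2
      = (d' + 1) * (c + 1) * (c * d - 1) * (t ^ 2 - 1) := by
  have hX : (c' + 1) * (c + t) = (t + 1) * (c + 1) := by linear_combination hc'p
  have hY : (d' + 1) * (d + t) = (t + 1) * (d + 1) := by linear_combination hd'p
  have hZ : (c' * d' - 1) * ((c + t) * (d + t)) = (t ^ 2 - 1) * (c * d - 1) := by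
    linear_combination d' * (d + t) * hc'p + (t * c + 1) * hd'p
  have hPm : (d + 1) * (c' + 1) * (c' * d' - 1) * (c + t) ^ 2 * (d + t)
      = (d' + 1) * (c + 1) * (c * d - 1) * (t ^ 2 - 1) * (d + t) := by
    linear_combination (d + 1) * (c' + 1) * (c + t) * hZ
      - (c + 1) * (c * d - 1) * (t ^ 2 - 1) * hY
      + (t ^ 2 - 1) * (c * d - 1) * (d + 1) * hX
  exact mul_right_cancel₀ hdt hPm

set_option maxHeartbeats 1000000 in
theorem stmt_3 (c d c' d' βx βp βx' βp' : ℝ)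
    (hdc : d ≤ c) (hd : 0 < d) (hcd : 1 < c * d)
    (hdc' : d' ≤ c') (hd' : 0 < d') (hcd' : 1 < c' * d')
    (hs : (c - d) / (c * d - 1) = (c' - d') / (c' * d' - 1))
    (hx : Real.sqrt ((d + 1) / (c + 1)) * βx / Real.sqrt (c * d - 1)
        = Real.sqrt ((d' + 1) / (c' + 1)) * βx' / Real.sqrt (c' * d' - 1))
    (hp : Real.sqrt ((c + 1) / (d + 1)) * βp / Real.sqrt (c * d - 1)
        = Real.sqrt ((c' + 1) / (d' + 1)) * βp' / Real.sqrt (c' * d' - 1)) :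
    (c' = c ∧ d' = d ∧ βx' = βx ∧ βp' = βp) ∨
      ∃ t ε : ℝ, (1 < t ∨ t < -c) ∧ (ε = 1 ∨ ε = -1) ∧
        c' = (t * c + 1) / (c + t) ∧
        d' = (t * d + 1) / (d + t) ∧
        βx' = ε * Real.sqrt (t ^ 2 - 1) * βx / (c + t) ∧
        βp' = ε * Real.sqrt (t ^ 2 - 1) * βp / (d + t) := by
  have hc1 : 1 < c := by nlinarith
  have hc1' : 1 < c' := by nlinarith
  have hg : 0 < c * d - 1 := by linarith
  have hg' : 0 < c' * d' - 1 := by linarith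
  have hsE : (c - d) * (c' * d' - 1) = (c' - d') * (c * d - 1) := by
    field_simp at hs
    linarith [hs]
  by_cases hcc : c' = c
  · -- first disjunct
    have hdd : d' = d := by
      rw [hcc] at hsE
      have h0 : (c * c - 1) * (d' - d) = 0 := by linear_combination hsE
      rcases mul_eq_zero.mp h0 with h | h
      · nlinarith
      · linarith
    rw [hcc, hdd] at hx hp
    have hQ : 0 < Real.sqrt ((d + 1) / (c + 1)) / Real.sqrt (c * d - 1) := by
      positivity
    have hQ2 : 0 < Real.sqrt ((c + 1) / (d + 1)) / Real.sqrt (c * d - 1) := by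
      positivity
    refine Or.inl ⟨hcc, hdd, ?_, ?_⟩
    · have h2 : Real.sqrt ((d + 1) / (c + 1)) / Real.sqrt (c * d - 1) * βx
          = Real.sqrt ((d + 1) / (c + 1)) / Real.sqrt (c * d - 1) * βx' := by
        calc Real.sqrt ((d + 1) / (c + 1)) / Real.sqrt (c * d - 1) * βx
            = Real.sqrt ((d + 1) / (c + 1)) * βx / Real.sqrt (c * d - 1) := by ring
          _ = Real.sqrt ((d + 1) / (c + 1)) * βx' / Real.sqrt (c * d - 1) := hx
          _ = Real.sqrt ((d + 1) / (c + 1)) / Real.sqrt (c * d - 1) * βx' := by ring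
      exact (mul_left_cancel₀ hQ.ne' h2).symm
    · have h2 : Real.sqrt ((c + 1) / (d + 1)) / Real.sqrt (c * d - 1) * βp
          = Real.sqrt ((c + 1) / (d + 1)) / Real.sqrt (c * d - 1) * βp' := by
        calc Real.sqrt ((c + 1) / (d + 1)) / Real.sqrt (c * d - 1) * βp
            = Real.sqrt ((c + 1) / (d + 1)) * βp / Real.sqrt (c * d - 1) := by ring
          _ = Real.sqrt ((c + 1) / (d + 1)) * βp' / Real.sqrt (c * d - 1) := hp
          _ = Real.sqrt ((c + 1) / (d + 1)) / Real.sqrt (c * d - 1) * βp' := by ring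
      exact (mul_left_cancel₀ hQ2.ne' h2).symm
  · -- damping case
    set t : ℝ := (c * c' - 1) / (c - c') with ht
    have hne : c - c' ≠ 0 := sub_ne_zero.mpr (fun h => hcc h.symm)
    have htm : t * (c - c') = c * c' - 1 := by rw [ht]; exact div_mul_cancel₀ _ hne
    have hc'p : c' * (c + t) = t * c + 1 := by
      field_simp [ht]
      linear_combination (-1) * htm
    rcases lt_or_gt_of_ne hcc with hlt | hgt
    · -- c' < c : t > 1, ε = 1
      have ht1 : 1 < t := by
        have h1 : t - 1 = (c + 1) * (c' - 1) / (c - c') := by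
          field_simp [ht]; linear_combination htm
        have hpos : 0 < (c + 1) * (c' - 1) / (c - c') :=
          div_pos (by nlinarith) (by linarith)
        linarith [h1 ▸ hpos.le, h1]
      have hct : (0:ℝ) < c + t := by linarith
      have hdt : (0:ℝ) < d + t := by linarith
      have hT : (0:ℝ) < t ^ 2 - 1 := by nlinarith
      have hKd : 0 < (c - d) * (t * c + 1) + (c + t) * (c * d - 1) := by
        have h1 : 0 < t * c + 1 := by nlinarith
        have h2 : 0 ≤ (c - d) * (t * c + 1) := mul_nonneg (by linarith) h1.le
        have h3 : 0 < (c + t) * (c * d - 1) := mul_pos hct hg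
        linarith
      have hd'p : d' * (d + t) = t * d + 1 := lemD c d c' d' t hsE hc'p hKd.ne'
      have hc'eq : c' = (t * c + 1) / (c + t) := by
        rw [eq_div_iff hct.ne']; exact hc'p
      have hd'eq : d' = (t * d + 1) / (d + t) := by
        rw [eq_div_iff hdt.ne']; exact hd'p
      have hrelx := lemA c d c' d' t hc'p hd'p hdt.ne'
      have hrelp' := lemA d c d' c' t hd'p hc'p hct.ne'
      have hrelp : (c + 1) * (d' + 1) * (c' * d' - 1) * (d + t) ^ 2
          = (c' + 1) * (d + 1) * (c * d - 1) * (t ^ 2 - 1) := by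
        linear_combination hrelp'
      have hbx := sqrt_key (d + 1) (c + 1) (d' + 1) (c' + 1) (c * d - 1)
        (c' * d' - 1) (c + t) (t ^ 2 - 1) βx βx' (by linarith) (by linarith)
        (by linarith) (by linarith) hg hg' hct.ne' hT.le hrelx hx
      have hbp := sqrt_key (c + 1) (d + 1) (c' + 1) (d' + 1) (c * d - 1)
        (c' * d' - 1) (d + t) (t ^ 2 - 1) βp βp' (by linarith) (by linarith)
        (by linarith) (by linarith) hg hg' hdt.ne' hT.le hrelp hp
      refine Or.inr ⟨t, 1, Or.inl ht1, Or.inl rfl, hc'eq, hd'eq, ?_, ?_⟩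
      · rw [hbx, abs_of_pos hct]; ring
      · rw [hbp, abs_of_pos hdt]; ring
    · -- c' > c : t < -c, ε = -1
      have htc : t < -c := by
        have h1 : t + c = (c ^ 2 - 1) / (c - c') := by
          field_simp [ht]; linear_combination htm
        have hneg : (c ^ 2 - 1) / (c - c') < 0 :=
          div_neg_of_pos_of_neg (by nlinarith) (by linarith)
        linarith [h1 ▸ hneg.le, h1]
      have hct : c + t < 0 := by linarith
      have hdt : d + t < 0 := by linarith
      have hT : (0:ℝ) < t ^ 2 - 1 := by nlinarith
      have hKd : (c - d) * (t * c + 1) + (c + t) * (c * d - 1) < 0 := by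
        have htc1 : t * c + 1 < 0 := by nlinarith
        nlinarith
      have hd'p : d' * (d + t) = t * d + 1 := lemD c d c' d' t hsE hc'p hKd.ne
      have hc'eq : c' = (t * c + 1) / (c + t) := by
        rw [eq_div_iff hct.ne]; exact hc'p
      have hd'eq : d' = (t * d + 1) / (d + t) := by
        rw [eq_div_iff hdt.ne]; exact hd'p
      have hrelx := lemA c d c' d' t hc'p hd'p hdt.ne
      have hrelp' := lemA d c d' c' t hd'p hc'p hct.ne
      have hrelp : (c + 1) * (d' + 1) * (c' * d' - 1) * (d + t) ^ 2
          = (c' + 1) * (d + 1) * (c * d - 1) * (t ^ 2 - 1) := by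
        linear_combination hrelp'
      have hbx := sqrt_key (d + 1) (c + 1) (d' + 1) (c' + 1) (c * d - 1)
        (c' * d' - 1) (c + t) (t ^ 2 - 1) βx βx' (by linarith) (by linarith)
        (by linarith) (by linarith) hg hg' hct.ne hT.le hrelx hx
      have hbp := sqrt_key (c + 1) (d + 1) (c' + 1) (d' + 1) (c * d - 1)
        (c' * d' - 1) (d + t) (t ^ 2 - 1) βp βp' (by linarith) (by linarith)
        (by linarith) (by linarith) hg hg' hdt.ne hT.le hrelp hp
      refine Or.inr ⟨t, -1, Or.inr htc, Or.inr rfl, hc'eq, hd'eq, ?_, ?_⟩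
      · rw [hbx, abs_of_neg hct, div_neg]; ring
      · rw [hbp, abs_of_neg hdt, div_neg]; ring
end

section
/- Fix k ≥ 1 and t : Fin k → ℝ with t(m) > 1 for all m. Let T be the 2k×2k paired diagonal matrix diag(t₁,t₁,…,t_k,t_k), let √(T²−1) be the paired diagonal matrix with entries √(t(m)² − 1), and let √T̃ be the paired diagonal matrix with entries √((t(m) − 1)/(t(m) + 1)). Let C be a 2k×2k real matrix and β ∈ ℝ^{2k}, and assume C + T and C + 1 are invertible. Define C' = T − √(T²−1)·(C + T)⁻¹·√(T²−1) and β' = √(T²−1)·((C + T)⁻¹.mulVec β). Then C' + 1 is invertible, (C' + 1)⁻¹·(C' − 1) = √T̃·((C + 1)⁻¹·(C − 1))·√T̃, and (C' + 1)⁻¹.mulVec β' = √T̃.mulVec ((C + 1)⁻¹.mulVec β). -/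
/-- The paired diagonal matrix `diag(u₁,u₁,…,u_k,u_k)`, with the `2k` indices
represented as `Fin 2 × Fin k` (index `(i, m)` is the `i`-th quadrature of mode `m`). -/
noncomputable def pairedDiagonal {k : ℕ} (u : Fin k → ℝ) :
    Matrix (Fin 2 × Fin k) (Fin 2 × Fin k) ℝ :=
  Matrix.diagonal fun p => u p.2

lemma pd_mul {k : ℕ} (u v : Fin k → ℝ) :
    pairedDiagonal u * pairedDiagonal v = pairedDiagonal (fun m => u m * v m) := by
  simp [pairedDiagonal, Matrix.diagonal_mul_diagonal]

lemma pd_ext {k : ℕ} {u v : Fin k → ℝ} (h : ∀ m, u m = v m) :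
    pairedDiagonal u = pairedDiagonal v := by
  unfold pairedDiagonal; exact congrArg Matrix.diagonal (funext fun p => h p.2)

lemma pd_one {k : ℕ} : pairedDiagonal (fun _ : Fin k => (1:ℝ)) = 1 := by
  simp [pairedDiagonal]

lemma pd_sub_one {k : ℕ} (u : Fin k → ℝ) :
    pairedDiagonal u - 1 = pairedDiagonal (fun m => u m - 1) := by
  rw [← pd_one, pairedDiagonal, pairedDiagonal, pairedDiagonal, Matrix.diagonal_sub]

lemma pd_add_one {k : ℕ} (u : Fin k → ℝ) :
    pairedDiagonal u + 1 = pairedDiagonal (fun m => u m + 1) := by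
  rw [← pd_one, pairedDiagonal, pairedDiagonal, pairedDiagonal, Matrix.diagonal_add]

theorem stmt_5 (k : ℕ) (hk : 1 ≤ k) (t : Fin k → ℝ) (ht : ∀ m, 1 < t m)
    (C : Matrix (Fin 2 × Fin k) (Fin 2 × Fin k) ℝ) (β : Fin 2 × Fin k → ℝ)
    (hCT : IsUnit (C + pairedDiagonal t)) (hC1 : IsUnit (C + 1))
    (C' : Matrix (Fin 2 × Fin k) (Fin 2 × Fin k) ℝ) (β' : Fin 2 × Fin k → ℝ)
    (hC' : C' = pairedDiagonal t -
      pairedDiagonal (fun m => Real.sqrt ((t m) ^ 2 - 1)) *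
        (C + pairedDiagonal t)⁻¹ *
        pairedDiagonal (fun m => Real.sqrt ((t m) ^ 2 - 1)))
    (hβ' : β' = (pairedDiagonal (fun m => Real.sqrt ((t m) ^ 2 - 1))).mulVec
      ((C + pairedDiagonal t)⁻¹.mulVec β)) :
    IsUnit (C' + 1) ∧
      (C' + 1)⁻¹ * (C' - 1) =
        pairedDiagonal (fun m => Real.sqrt ((t m - 1) / (t m + 1))) *
          ((C + 1)⁻¹ * (C - 1)) *
          pairedDiagonal (fun m => Real.sqrt ((t m - 1) / (t m + 1))) ∧
      (C' + 1)⁻¹.mulVec β' =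
        (pairedDiagonal (fun m => Real.sqrt ((t m - 1) / (t m + 1)))).mulVec
          ((C + 1)⁻¹.mulVec β) := by
  -- real-number facts
  have htm : ∀ m, (0:ℝ) < t m - 1 := fun m => by linarith [ht m]
  have htp : ∀ m, (0:ℝ) < t m + 1 := fun m => by linarith [ht m]
  have hsq : ∀ m, (0:ℝ) < t m ^ 2 - 1 := fun m => by nlinarith [ht m]
  have hspos : ∀ m, 0 < Real.sqrt (t m ^ 2 - 1) := fun m => Real.sqrt_pos.mpr (hsq m)
  have hss : ∀ m, Real.sqrt (t m ^ 2 - 1) * Real.sqrt (t m ^ 2 - 1) = t m ^ 2 - 1 :=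
    fun m => Real.mul_self_sqrt (le_of_lt (hsq m))
  have hr1 : ∀ m, Real.sqrt ((t m - 1) / (t m + 1))
      = (Real.sqrt (t m ^ 2 - 1))⁻¹ * (t m - 1) := by
    intro m
    rw [show (t m - 1) / (t m + 1) = ((Real.sqrt (t m ^ 2 - 1))⁻¹ * (t m - 1)) ^ 2 by
      have h1 := hss m
      have h2 := (hspos m).ne'
      have h3 := (htp m).ne'
      have h4 := (htm m).ne'
      field_simp
      nlinarith [hss m]]
    exact Real.sqrt_sq (mul_nonneg (inv_nonneg.mpr (Real.sqrt_nonneg _)) (le_of_lt (htm m)))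
  have hr2 : ∀ m, Real.sqrt ((t m - 1) / (t m + 1))
      = (t m + 1)⁻¹ * Real.sqrt (t m ^ 2 - 1) := by
    intro m
    rw [show (t m - 1) / (t m + 1) = ((t m + 1)⁻¹ * Real.sqrt (t m ^ 2 - 1)) ^ 2 by
      have h1 := hss m
      have h2 := (htp m).ne'
      have h4 := (htm m).ne'
      field_simp
      nlinarith [hss m]]
    exact Real.sqrt_sq (mul_nonneg (le_of_lt (inv_pos.mpr (htp m))) (Real.sqrt_nonneg _))
  -- matrix abbreviations
  set T := pairedDiagonal t with hT
  set S := pairedDiagonal (fun m => Real.sqrt ((t m) ^ 2 - 1)) with hS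
  set R := pairedDiagonal (fun m => Real.sqrt ((t m - 1) / (t m + 1))) with hR
  set Si := pairedDiagonal (fun m => (Real.sqrt ((t m) ^ 2 - 1))⁻¹) with hSi
  set ES := pairedDiagonal (fun m => (t m - 1)⁻¹ * Real.sqrt ((t m) ^ 2 - 1)) with hES
  set FS := pairedDiagonal (fun m => (t m + 1)⁻¹ * Real.sqrt ((t m) ^ 2 - 1)) with hFS
  -- invertibility facts
  have hdCT := (Matrix.isUnit_iff_isUnit_det _).mp hCT
  have hdC1 := (Matrix.isUnit_iff_isUnit_det _).mp hC1
  have hCT1 : (C + T)⁻¹ * (C + T) = 1 := Matrix.nonsing_inv_mul _ hdCT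
  have hCT2 : (C + T) * (C + T)⁻¹ = 1 := Matrix.mul_nonsing_inv _ hdCT
  have hC11 : (C + 1)⁻¹ * (C + 1) = 1 := Matrix.nonsing_inv_mul _ hdC1
  have hC12 : (C + 1) * (C + 1)⁻¹ = 1 := Matrix.mul_nonsing_inv _ hdC1
  -- diagonal identities
  have hSSi : S * Si = 1 := by
    rw [hS, hSi, pd_mul, pd_ext (fun m => mul_inv_cancel₀ (hspos m).ne'), pd_one]
  have hSiS : Si * S = 1 := by
    rw [hS, hSi, pd_mul, pd_ext (fun m => inv_mul_cancel₀ (hspos m).ne'), pd_one]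
  have hESR : ES * R = 1 := by
    rw [hES, hR, pd_mul, pd_ext (fun m => ?_), pd_one]
    rw [hr1 m]
    have h2 := (hspos m).ne'
    have h3 := (htm m).ne'
    field_simp
  have hRES : R * ES = 1 := by
    rw [hES, hR, pd_mul, pd_ext (fun m => ?_), pd_one]
    rw [hr2 m]
    have h1 := hss m
    have h2 := (htp m).ne'
    have h3 := (htm m).ne'
    field_simp
    nlinarith [hss m]
  have hFSR : FS = R := by
    rw [hFS, hR]; exact pd_ext (fun m => (hr2 m).symm)
  have hSES : S * ES = T + 1 := by
    rw [hS, hES, pd_mul, hT, pd_add_one]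
    refine pd_ext (fun m => ?_)
    have h1 := hss m
    have h3 := (htm m).ne'
    field_simp
    nlinarith [hss m]
  have hSFS : S * FS = T - 1 := by
    rw [hS, hFS, pd_mul, hT, pd_sub_one]
    refine pd_ext (fun m => ?_)
    have h1 := hss m
    have h2 := (htp m).ne'
    field_simp
    nlinarith [hss m]
  have hTm1ES : (T - 1) * ES = S := by
    rw [hT, pd_sub_one, hES, pd_mul, hS]
    exact pd_ext (fun m => by
      have h3 := (htm m).ne'
      field_simp)
  have hTp1FS : (T + 1) * FS = S := by
    rw [hT, pd_add_one, hFS, pd_mul, hS]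
    exact pd_ext (fun m => by
      have h2 := (htp m).ne'
      field_simp)
  -- factorizations
  have hM : C' + 1 = S * ((C + T)⁻¹ * ((C + 1) * ES)) := by
    have e1 : (C + 1) * ES = (C + T) * ES - S := by
      rw [show (C + 1 : Matrix _ _ ℝ) = (C + T) - (T - 1) by abel, sub_mul, hTm1ES]
    rw [e1, mul_sub, mul_sub, ← mul_assoc ((C+T)⁻¹), hCT1, one_mul, hSES, hC']
    rw [mul_assoc S]
    abel
  have hM2 : C' - 1 = S * ((C + T)⁻¹ * ((C - 1) * FS)) := by
    have e1 : (C - 1) * FS = (C + T) * FS - S := by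
      rw [show (C - 1 : Matrix _ _ ℝ) = (C + T) - (T + 1) by abel, sub_mul, hTp1FS]
    rw [e1, mul_sub, mul_sub, ← mul_assoc ((C+T)⁻¹), hCT1, one_mul, hSFS, hC']
    rw [mul_assoc S]
    abel
  set N := R * ((C + 1)⁻¹ * ((C + T) * Si)) with hN
  have hMN : (C' + 1) * N = 1 := by
    rw [hM, hN]
    simp only [mul_assoc]
    rw [← mul_assoc ES R, hESR, one_mul,
        ← mul_assoc (C + 1), hC12, one_mul,
        ← mul_assoc ((C + T)⁻¹), hCT1, one_mul, hSSi]
  have hunit : IsUnit (C' + 1) := by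
    refine (Matrix.isUnit_iff_isUnit_det _).mpr (IsUnit.of_mul_eq_one N.det ?_)
    rw [← Matrix.det_mul, hMN, Matrix.det_one]
  have hinv : (C' + 1)⁻¹ = N := Matrix.inv_eq_right_inv hMN
  refine ⟨hunit, ?_, ?_⟩
  · rw [hinv, hM2, hN]
    simp only [mul_assoc]
    rw [← mul_assoc Si S, hSiS, one_mul,
        ← mul_assoc (C + T), hCT2, one_mul, hFSR]
  · rw [hinv, hβ', Matrix.mulVec_mulVec, Matrix.mulVec_mulVec, hN]
    rw [Matrix.mulVec_mulVec]
    congr 1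
    simp only [mul_assoc]
    rw [← mul_assoc Si S ((C + T)⁻¹), hSiS, one_mul, hCT2, mul_one]
end

section
/- Fix k ≥ 1. Let ω be the 2×2 real matrix with rows (0,1) and (−1,0), and let Ω be the 2k×2k block-diagonal matrix with k copies of ω. Let C be a 2k×2k real symmetric matrix such that the complex Hermitian matrix C − i·Ω (entries of C and Ω coerced to ℂ) is positive semidefinite. Let t : Fin k → ℝ with t(m) > 1 for all m, let T be the paired diagonal matrix diag(t₁,t₁,…,t_k,t_k), and let √(T²−1) be the paired diagonal matrix with entries √(t(m)² − 1). Then C + T is positive definite (in particular invertible), and the matrix C' = T − √(T²−1)·(C + T)⁻¹·√(T²−1) again satisfies that the complex Hermitian matrix C' − i·Ω is positive semidefinite. -/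
open scoped ComplexOrder

/-- The single-mode symplectic form `ω = [[0,1],[−1,0]]`. -/
def omegaMat : Matrix (Fin 2) (Fin 2) ℝ := !![0, 1; -1, 0]

/-- The `2k × 2k` block-diagonal symplectic form `Ω` built from `k` copies of `ω`. -/
def OmegaMat (k : ℕ) : Matrix (Fin 2 × Fin k) (Fin 2 × Fin k) ℝ :=
  Matrix.blockDiagonal fun _ : Fin k => omegaMat

/-- The uncertainty relation `C ⪰ iΩ`: the complex Hermitian matrix `C − i·Ω`
is positive semidefinite. -/
def UncertaintyOK {k : ℕ} (C : Matrix (Fin 2 × Fin k) (Fin 2 × Fin k) ℝ) : Prop :=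
  (C.map (Complex.ofReal) - Complex.I • (OmegaMat k).map (Complex.ofReal)).PosSemidef

open Matrix

lemma omega_mul : omegaMat * omegaMat = -1 := by
  ext i j
  fin_cases i <;> fin_cases j <;>
    simp [omegaMat, Matrix.mul_apply, Fin.sum_univ_two, Matrix.one_apply]

lemma omega_transpose : omegaMat.transpose = -omegaMat := by
  ext i j
  fin_cases i <;> fin_cases j <;> simp [omegaMat]

lemma Omega_mul (k : ℕ) : OmegaMat k * OmegaMat k = -1 := by
  rw [OmegaMat, ← Matrix.blockDiagonal_mul, omega_mul]
  rw [show (fun _ : Fin k => (-1 : Matrix (Fin 2) (Fin 2) ℝ)) = -(fun _ => 1) from rfl,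
    Matrix.blockDiagonal_neg]
  norm_num
  exact Matrix.blockDiagonal_one

lemma Omega_transpose (k : ℕ) : (OmegaMat k)ᵀ = -OmegaMat k := by
  rw [OmegaMat, Matrix.blockDiagonal_transpose]
  simp only [omega_transpose]
  rw [show (fun _ : Fin k => -omegaMat) = -(fun _ => omegaMat) from rfl,
    Matrix.blockDiagonal_neg]

set_option linter.unusedSectionVars false
section Aux
open Matrix
variable {k : ℕ}

lemma diag_block_comm {α : Type*} [CommRing α]
    (u : Fin k → α) (M : Matrix (Fin 2) (Fin 2) α) :
    Matrix.diagonal (fun p : Fin 2 × Fin k => u p.2) * Matrix.blockDiagonal (fun _ : Fin k => M)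
      = Matrix.blockDiagonal (fun _ : Fin k => M) * Matrix.diagonal (fun p => u p.2) := by
  ext ⟨i, a⟩ ⟨j, b⟩
  simp only [Matrix.diagonal_mul, Matrix.mul_diagonal, Matrix.blockDiagonal_apply]
  by_cases h : a = b
  · subst h; simp [mul_comm]
  · simp [h]

variable {n : Type*} [Fintype n] [DecidableEq n]

lemma mapC_add (A B : Matrix n n ℝ) :
    (A + B).map Complex.ofReal = A.map Complex.ofReal + B.map Complex.ofReal := by
  ext i j; simp [Matrix.map_apply]

lemma mapC_sub (A B : Matrix n n ℝ) :
    (A - B).map Complex.ofReal = A.map Complex.ofReal - B.map Complex.ofReal := by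
  ext i j; simp [Matrix.map_apply]

lemma mapC_mul (A B : Matrix n n ℝ) :
    (A * B).map Complex.ofReal = A.map Complex.ofReal * B.map Complex.ofReal := by
  ext i j
  simp [Matrix.map_apply, Matrix.mul_apply]

lemma mapC_one : (1 : Matrix n n ℝ).map Complex.ofReal = 1 := by
  ext i j; by_cases h : i = j <;> simp [Matrix.map_apply, Matrix.one_apply, h]

lemma mapC_neg (A : Matrix n n ℝ) : (-A).map Complex.ofReal = -(A.map Complex.ofReal) := by
  ext i j; simp [Matrix.map_apply]

lemma mapC_transpose (A : Matrix n n ℝ) :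
    (A.map Complex.ofReal)ᴴ = Aᵀ.map Complex.ofReal := by
  ext i j
  simp [Matrix.conjTranspose_apply, Matrix.map_apply, Complex.conj_ofReal,
    Matrix.transpose_apply]

lemma mapC_conjTranspose (A : Matrix n n ℝ) (h : A.IsSymm) :
    (A.map Complex.ofReal)ᴴ = A.map Complex.ofReal := by
  rw [mapC_transpose, h]

/-- The complexified matrix `iΩ`. -/
noncomputable def Jmat (k : ℕ) : Matrix (Fin 2 × Fin k) (Fin 2 × Fin k) ℂ :=
  Complex.I • (OmegaMat k).map Complex.ofReal

lemma Jmat_herm : (Jmat k)ᴴ = Jmat k := by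
  rw [Jmat, Matrix.conjTranspose_smul, mapC_transpose, Omega_transpose, mapC_neg]
  simp [Complex.conj_I]

lemma Jmat_sq : Jmat k * Jmat k = 1 := by
  rw [Jmat, Matrix.smul_mul, Matrix.mul_smul, smul_smul, Complex.I_mul_I,
    ← mapC_mul, Omega_mul, mapC_neg, mapC_one]
  simp

lemma mapC_diag (u : Fin k → ℝ) :
    (pairedDiagonal u).map Complex.ofReal
      = Matrix.diagonal (fun p : Fin 2 × Fin k => (u p.2 : ℂ)) := by
  rw [pairedDiagonal, Matrix.diagonal_map Complex.ofReal_zero]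

lemma diag_comm_J (u : Fin k → ℝ) :
    (pairedDiagonal u).map Complex.ofReal * Jmat k
      = Jmat k * (pairedDiagonal u).map Complex.ofReal := by
  rw [mapC_diag, Jmat, Matrix.mul_smul, Matrix.smul_mul, OmegaMat, Matrix.blockDiagonal_map _ _ Complex.ofReal_zero]
  rw [diag_block_comm (fun m => (u m : ℂ)) (omegaMat.map Complex.ofReal)]

lemma sqrt2_fact :
    ((((Real.sqrt 2)⁻¹ : ℝ)) : ℂ) * ((((Real.sqrt 2)⁻¹ : ℝ)) : ℂ) * 2 = 1 := by
  have h : Real.sqrt 2 * Real.sqrt 2 = 2 := Real.mul_self_sqrt (by norm_num)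
  have : ((Real.sqrt 2)⁻¹ : ℝ) * ((Real.sqrt 2)⁻¹ : ℝ) * 2 = 1 := by
    rw [← mul_inv, h]
    norm_num
  exact_mod_cast congrArg (Complex.ofReal) this

lemma one_add_J_psd : (1 + Jmat k).PosSemidef := by
  suffices hB : ∃ B : Matrix (Fin 2 × Fin k) (Fin 2 × Fin k) ℂ, 1 + Jmat k = Bᴴ * B by
    obtain ⟨B, hB⟩ := hB; rw [hB]; exact Matrix.posSemidef_conjTranspose_mul_self B
  refine ⟨((((Real.sqrt 2)⁻¹ : ℝ)) : ℂ) • (1 + Jmat k), ?_⟩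
  have hherm : (1 + Jmat k)ᴴ = 1 + Jmat k := by
    rw [Matrix.conjTranspose_add, Matrix.conjTranspose_one, Jmat_herm]
  have hsq : (1 + Jmat k) * (1 + Jmat k) = (2 : ℂ) • (1 + Jmat k) := by
    simp only [mul_add, add_mul, one_mul, mul_one, Jmat_sq, two_smul, smul_add]
    abel
  rw [Matrix.conjTranspose_smul, hherm, Matrix.smul_mul, Matrix.mul_smul, smul_smul, hsq,
    smul_smul, show (star ((((Real.sqrt 2)⁻¹ : ℝ)) : ℂ)) = ((((Real.sqrt 2)⁻¹ : ℝ)) : ℂ)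
      from Complex.conj_ofReal _, sqrt2_fact, one_smul]

lemma one_sub_J_psd : (1 - Jmat k).PosSemidef := by
  suffices hB : ∃ B : Matrix (Fin 2 × Fin k) (Fin 2 × Fin k) ℂ, 1 - Jmat k = Bᴴ * B by
    obtain ⟨B, hB⟩ := hB; rw [hB]; exact Matrix.posSemidef_conjTranspose_mul_self B
  refine ⟨((((Real.sqrt 2)⁻¹ : ℝ)) : ℂ) • (1 - Jmat k), ?_⟩
  have hherm : (1 - Jmat k)ᴴ = 1 - Jmat k := by
    rw [Matrix.conjTranspose_sub, Matrix.conjTranspose_one, Jmat_herm]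
  have hsq : (1 - Jmat k) * (1 - Jmat k) = (2 : ℂ) • (1 - Jmat k) := by
    simp only [mul_sub, sub_mul, one_mul, mul_one, Jmat_sq, two_smul, smul_sub]
    abel
  rw [Matrix.conjTranspose_smul, hherm, Matrix.smul_mul, Matrix.mul_smul, smul_smul, hsq,
    smul_smul, show (star ((((Real.sqrt 2)⁻¹ : ℝ)) : ℂ)) = ((((Real.sqrt 2)⁻¹ : ℝ)) : ℂ)
      from Complex.conj_ofReal _, sqrt2_fact, one_smul]

lemma psd_exists_eq_conjTranspose_mul_self {A : Matrix n n ℂ} (hA : A.PosSemidef) :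
    ∃ B : Matrix n n ℂ, A = Bᴴ * B := by
  open scoped MatrixOrder in
  have h0 : 0 ≤ A := Matrix.nonneg_iff_posSemidef.mpr hA
  open scoped MatrixOrder in
  exact ⟨CFC.sqrt A, by
    rw [show (CFC.sqrt A)ᴴ = CFC.sqrt A from (IsSelfAdjoint.of_nonneg (CFC.sqrt_nonneg A)).star_eq,
      CFC.sqrt_mul_sqrt_self A h0]⟩

lemma inv_comm_of_comm {A B : Matrix n n ℂ} (h : A * B = B * A) (hA : IsUnit A.det) :
    A⁻¹ * B = B * A⁻¹ := by
  have h1 : A⁻¹ * B = A⁻¹ * B * (A * A⁻¹) := by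
    rw [Matrix.mul_nonsing_inv _ hA, mul_one]
  calc A⁻¹ * B = A⁻¹ * (B * A) * A⁻¹ := by rw [h1]; noncomm_ring
    _ = A⁻¹ * (A * B) * A⁻¹ := by rw [h]
    _ = (A⁻¹ * A) * B * A⁻¹ := by noncomm_ring
    _ = B * A⁻¹ := by rw [Matrix.nonsing_inv_mul _ hA, one_mul]

end Aux

theorem stmt_6 (k : ℕ) (hk : 1 ≤ k)
    (C : Matrix (Fin 2 × Fin k) (Fin 2 × Fin k) ℝ) (hCsymm : C.IsSymm)
    (hC : UncertaintyOK C)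
    (t : Fin k → ℝ) (ht : ∀ m, 1 < t m) :
    (C + pairedDiagonal t).PosDef ∧
      UncertaintyOK
        (pairedDiagonal t -
          pairedDiagonal (fun m => Real.sqrt ((t m) ^ 2 - 1)) *
            (C + pairedDiagonal t)⁻¹ *
            pairedDiagonal (fun m => Real.sqrt ((t m) ^ 2 - 1))) := by
  classical
  have hsq : ∀ m, Real.sqrt ((t m) ^ 2 - 1) ^ 2 = (t m) ^ 2 - 1 :=
    fun m => Real.sq_sqrt (by nlinarith [ht m])
  have hC' : (C.map Complex.ofReal - Jmat k).PosSemidef := hC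
  -- the quadratic form identity for real vectors
  have key : ∀ (A : Matrix (Fin 2 × Fin k) (Fin 2 × Fin k) ℝ) (x : (Fin 2 × Fin k) → ℝ),
      star (fun i => (x i : ℂ)) ⬝ᵥ ((A.map Complex.ofReal) *ᵥ fun i => (x i : ℂ))
        = ((x ⬝ᵥ A *ᵥ x : ℝ) : ℂ) := by
    intro A x
    simp only [dotProduct, Matrix.mulVec, Matrix.map_apply, Pi.star_apply,
      Complex.star_def, Complex.conj_ofReal]
    push_cast
    ring
  -- the symplectic form is antisymmetric, so its real quadratic form vanishes
  have hΩanti : ∀ x : (Fin 2 × Fin k) → ℝ, x ⬝ᵥ (OmegaMat k) *ᵥ x = 0 := by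
    intro x
    have h1 : x ⬝ᵥ (OmegaMat k) *ᵥ x = (OmegaMat k)ᵀ *ᵥ x ⬝ᵥ x := by
      rw [Matrix.mulVec_transpose, Matrix.dotProduct_mulVec]
    rw [Omega_transpose, Matrix.neg_mulVec, neg_dotProduct] at h1
    have h2 : (OmegaMat k *ᵥ x) ⬝ᵥ x = x ⬝ᵥ (OmegaMat k *ᵥ x) := dotProduct_comm _ _
    rw [h2] at h1
    linarith
  -- C is real positive semidefinite
  have hCr : C.PosSemidef := by
    rw [Matrix.posSemidef_iff_dotProduct_mulVec]
    constructor
    · ext i j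
      simp only [Matrix.conjTranspose_apply, star_trivial]
      exact hCsymm.apply i j
    · intro x
      have h0 := (Matrix.posSemidef_iff_dotProduct_mulVec.mp hC').2 (fun i => (x i : ℂ))
      rw [Matrix.sub_mulVec, dotProduct_sub, key C x, Jmat,
        Matrix.smul_mulVec, dotProduct_smul, key (OmegaMat k) x, hΩanti x] at h0
      simp only [Complex.ofReal_zero, smul_zero, sub_zero] at h0
      exact Complex.zero_le_real.mp h0
  have hTr : (pairedDiagonal t).PosDef := by
    rw [pairedDiagonal]
    exact Matrix.posDef_diagonal_iff.mpr fun p => lt_trans one_pos (ht p.2)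
  have goal1 : (C + pairedDiagonal t).PosDef := Matrix.PosDef.posSemidef_add hCr hTr
  -- complexified matrices
  have hTcJ : ((pairedDiagonal t).map Complex.ofReal + Jmat k).PosDef := by
    have h1 : ((pairedDiagonal t).map Complex.ofReal - 1).PosDef := by
      rw [mapC_diag, ← Matrix.diagonal_one, Matrix.diagonal_sub]
      exact Matrix.posDef_diagonal_iff.mpr fun p => by
        have : ((t p.2 : ℂ) - 1) = ((t p.2 - 1 : ℝ) : ℂ) := by push_cast; ring
        rw [this]
        exact Complex.zero_lt_real.mpr (by linarith [ht p.2])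
    have h2 : (pairedDiagonal t).map Complex.ofReal + Jmat k
        = ((pairedDiagonal t).map Complex.ofReal - 1) + (1 + Jmat k) := by abel
    rw [h2]
    exact h1.add_posSemidef one_add_J_psd
  have hTcJ' : ((pairedDiagonal t).map Complex.ofReal - Jmat k).PosDef := by
    have h1 : ((pairedDiagonal t).map Complex.ofReal - 1).PosDef := by
      rw [mapC_diag, ← Matrix.diagonal_one, Matrix.diagonal_sub]
      exact Matrix.posDef_diagonal_iff.mpr fun p => by
        have : ((t p.2 : ℂ) - 1) = ((t p.2 - 1 : ℝ) : ℂ) := by push_cast; ring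
        rw [this]
        exact Complex.zero_lt_real.mpr (by linarith [ht p.2])
    have h2 : (pairedDiagonal t).map Complex.ofReal - Jmat k
        = ((pairedDiagonal t).map Complex.ofReal - 1) + (1 - Jmat k) := by abel
    rw [h2]
    exact h1.add_posSemidef one_sub_J_psd
  have hCT : (C.map Complex.ofReal + (pairedDiagonal t).map Complex.ofReal).PosDef := by
    have h2 : C.map Complex.ofReal + (pairedDiagonal t).map Complex.ofReal
        = (C.map Complex.ofReal - Jmat k) + ((pairedDiagonal t).map Complex.ofReal + Jmat k) := by
      abel
    rw [h2]
    exact Matrix.PosDef.posSemidef_add hC' hTcJ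
  -- abbreviate the damping diagonal
  have hScH : ((pairedDiagonal fun m => Real.sqrt ((t m) ^ 2 - 1)).map Complex.ofReal)ᴴ
      = (pairedDiagonal fun m => Real.sqrt ((t m) ^ 2 - 1)).map Complex.ofReal :=
    mapC_conjTranspose _ (Matrix.isSymm_diagonal _)
  have hScJ := diag_comm_J (k := k) (fun m => Real.sqrt ((t m) ^ 2 - 1))
  have hScTc : (pairedDiagonal fun m => Real.sqrt ((t m) ^ 2 - 1)).map Complex.ofReal *
        (pairedDiagonal t).map Complex.ofReal
      = (pairedDiagonal t).map Complex.ofReal *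
        (pairedDiagonal fun m => Real.sqrt ((t m) ^ 2 - 1)).map Complex.ofReal := by
    rw [mapC_diag, mapC_diag, Matrix.diagonal_mul_diagonal, Matrix.diagonal_mul_diagonal]
    exact congrArg Matrix.diagonal (funext fun p => mul_comm _ _)
  have hScTJ : ((pairedDiagonal t).map Complex.ofReal + Jmat k) *
        (pairedDiagonal fun m => Real.sqrt ((t m) ^ 2 - 1)).map Complex.ofReal
      = (pairedDiagonal fun m => Real.sqrt ((t m) ^ 2 - 1)).map Complex.ofReal *
        ((pairedDiagonal t).map Complex.ofReal + Jmat k) := by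
    rw [add_mul, mul_add, hScJ, hScTc]
  have hSS : (pairedDiagonal fun m => Real.sqrt ((t m) ^ 2 - 1)).map Complex.ofReal *
        (pairedDiagonal fun m => Real.sqrt ((t m) ^ 2 - 1)).map Complex.ofReal
      = ((pairedDiagonal t).map Complex.ofReal + Jmat k) *
        ((pairedDiagonal t).map Complex.ofReal - Jmat k) := by
    have hTJ : (pairedDiagonal t).map Complex.ofReal * Jmat k
        = Jmat k * (pairedDiagonal t).map Complex.ofReal := diag_comm_J t
    have e1 : ((pairedDiagonal t).map Complex.ofReal + Jmat k) *
          ((pairedDiagonal t).map Complex.ofReal - Jmat k)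
        = (pairedDiagonal t).map Complex.ofReal * (pairedDiagonal t).map Complex.ofReal
            - Jmat k * Jmat k
          + (Jmat k * (pairedDiagonal t).map Complex.ofReal
              - (pairedDiagonal t).map Complex.ofReal * Jmat k) := by
      noncomm_ring
    rw [e1, hTJ, Jmat_sq, sub_self, add_zero, mapC_diag, mapC_diag,
      Matrix.diagonal_mul_diagonal, Matrix.diagonal_mul_diagonal, ← Matrix.diagonal_one,
      Matrix.diagonal_sub]
    refine congrArg Matrix.diagonal (funext fun p => ?_)
    have h := hsq p.2
    rw [pow_two] at h
    rw [← Complex.ofReal_mul, h]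
    push_cast
    ring
  have hdetTJ : IsUnit ((pairedDiagonal t).map Complex.ofReal + Jmat k).det :=
    (Matrix.isUnit_iff_isUnit_det _).mp hTcJ.isUnit
  have hSchurN : ((pairedDiagonal t).map Complex.ofReal - Jmat k) -
      (pairedDiagonal fun m => Real.sqrt ((t m) ^ 2 - 1)).map Complex.ofReal *
        ((pairedDiagonal t).map Complex.ofReal + Jmat k)⁻¹ *
        (pairedDiagonal fun m => Real.sqrt ((t m) ^ 2 - 1)).map Complex.ofReal = 0 := by
    have hcomm' := inv_comm_of_comm hScTJ hdetTJ
    have h3 : (pairedDiagonal fun m => Real.sqrt ((t m) ^ 2 - 1)).map Complex.ofReal *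
        ((pairedDiagonal t).map Complex.ofReal + Jmat k)⁻¹ *
        (pairedDiagonal fun m => Real.sqrt ((t m) ^ 2 - 1)).map Complex.ofReal
        = ((pairedDiagonal t).map Complex.ofReal + Jmat k)⁻¹ *
          ((pairedDiagonal fun m => Real.sqrt ((t m) ^ 2 - 1)).map Complex.ofReal *
            (pairedDiagonal fun m => Real.sqrt ((t m) ^ 2 - 1)).map Complex.ofReal) := by
      rw [← hcomm', mul_assoc]
    rw [h3, hSS, ← mul_assoc, Matrix.nonsing_inv_mul _ hdetTJ, one_mul, sub_self]
  haveI : Invertible ((pairedDiagonal t).map Complex.ofReal + Jmat k) :=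
    ((pairedDiagonal t).map Complex.ofReal + Jmat k).invertibleOfIsUnitDet hdetTJ
  have hN : (Matrix.fromBlocks ((pairedDiagonal t).map Complex.ofReal + Jmat k)
      ((pairedDiagonal fun m => Real.sqrt ((t m) ^ 2 - 1)).map Complex.ofReal)
      ((pairedDiagonal fun m => Real.sqrt ((t m) ^ 2 - 1)).map Complex.ofReal)
      ((pairedDiagonal t).map Complex.ofReal - Jmat k)).PosSemidef := by
    have h := (Matrix.PosDef.fromBlocks₁₁
      ((pairedDiagonal fun m => Real.sqrt ((t m) ^ 2 - 1)).map Complex.ofReal)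
      ((pairedDiagonal t).map Complex.ofReal - Jmat k) hTcJ).mpr
      (by rw [hScH, hSchurN]; exact Matrix.PosSemidef.zero)
    rwa [hScH] at h
  have hP : (Matrix.fromBlocks (C.map Complex.ofReal - Jmat k) 0 0
      (0 : Matrix (Fin 2 × Fin k) (Fin 2 × Fin k) ℂ)).PosSemidef := by
    obtain ⟨B, hB⟩ := psd_exists_eq_conjTranspose_mul_self hC'
    have h : Matrix.fromBlocks (C.map Complex.ofReal - Jmat k) 0 0
        (0 : Matrix (Fin 2 × Fin k) (Fin 2 × Fin k) ℂ)
        = (Matrix.fromBlocks B 0 0 0)ᴴ * (Matrix.fromBlocks B 0 0 0) := by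
      rw [hB, Matrix.fromBlocks_conjTranspose, Matrix.fromBlocks_multiply]
      simp
    rw [h]
    exact Matrix.posSemidef_conjTranspose_mul_self _
  have hM : (Matrix.fromBlocks (C.map Complex.ofReal + (pairedDiagonal t).map Complex.ofReal)
      ((pairedDiagonal fun m => Real.sqrt ((t m) ^ 2 - 1)).map Complex.ofReal)
      ((pairedDiagonal fun m => Real.sqrt ((t m) ^ 2 - 1)).map Complex.ofReal)
      ((pairedDiagonal t).map Complex.ofReal - Jmat k)).PosSemidef := by
    have hb1 : C.map Complex.ofReal - Jmat k
        + ((pairedDiagonal t).map Complex.ofReal + Jmat k)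
        = C.map Complex.ofReal + (pairedDiagonal t).map Complex.ofReal := by abel
    have h : Matrix.fromBlocks (C.map Complex.ofReal - Jmat k) 0 0 0
          + Matrix.fromBlocks ((pairedDiagonal t).map Complex.ofReal + Jmat k)
            ((pairedDiagonal fun m => Real.sqrt ((t m) ^ 2 - 1)).map Complex.ofReal)
            ((pairedDiagonal fun m => Real.sqrt ((t m) ^ 2 - 1)).map Complex.ofReal)
            ((pairedDiagonal t).map Complex.ofReal - Jmat k)
        = Matrix.fromBlocks (C.map Complex.ofReal + (pairedDiagonal t).map Complex.ofReal)
          ((pairedDiagonal fun m => Real.sqrt ((t m) ^ 2 - 1)).map Complex.ofReal)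
          ((pairedDiagonal fun m => Real.sqrt ((t m) ^ 2 - 1)).map Complex.ofReal)
          ((pairedDiagonal t).map Complex.ofReal - Jmat k) := by
      rw [Matrix.fromBlocks_add, hb1, zero_add, zero_add]
    rw [← h]
    exact hP.add hN
  haveI : Invertible (C.map Complex.ofReal + (pairedDiagonal t).map Complex.ofReal) :=
    (C.map Complex.ofReal + (pairedDiagonal t).map Complex.ofReal).invertibleOfIsUnitDet
      ((Matrix.isUnit_iff_isUnit_det _).mp hCT.isUnit)
  have hSchur : (((pairedDiagonal t).map Complex.ofReal - Jmat k) -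
      (pairedDiagonal fun m => Real.sqrt ((t m) ^ 2 - 1)).map Complex.ofReal *
        (C.map Complex.ofReal + (pairedDiagonal t).map Complex.ofReal)⁻¹ *
        (pairedDiagonal fun m => Real.sqrt ((t m) ^ 2 - 1)).map Complex.ofReal).PosSemidef := by
    have h := (Matrix.PosDef.fromBlocks₁₁
      ((pairedDiagonal fun m => Real.sqrt ((t m) ^ 2 - 1)).map Complex.ofReal)
      ((pairedDiagonal t).map Complex.ofReal - Jmat k) hCT).mp (by rw [hScH]; exact hM)
    rwa [hScH] at h
  -- the map of the inverse is the inverse of the map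
  have hinv : ((C + pairedDiagonal t)⁻¹).map Complex.ofReal
      = (C.map Complex.ofReal + (pairedDiagonal t).map Complex.ofReal)⁻¹ := by
    symm
    apply Matrix.inv_eq_right_inv
    rw [← mapC_add, ← mapC_mul,
      Matrix.mul_nonsing_inv _ ((Matrix.isUnit_iff_isUnit_det _).mp goal1.isUnit), mapC_one]
  refine ⟨goal1, ?_⟩
  show ((pairedDiagonal t -
      pairedDiagonal (fun m => Real.sqrt ((t m) ^ 2 - 1)) * (C + pairedDiagonal t)⁻¹ *
        pairedDiagonal (fun m => Real.sqrt ((t m) ^ 2 - 1))).map Complex.ofReal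
    - Jmat k).PosSemidef
  have heq : ((pairedDiagonal t -
      pairedDiagonal (fun m => Real.sqrt ((t m) ^ 2 - 1)) * (C + pairedDiagonal t)⁻¹ *
        pairedDiagonal (fun m => Real.sqrt ((t m) ^ 2 - 1))).map Complex.ofReal
    - Jmat k)
      = (((pairedDiagonal t).map Complex.ofReal - Jmat k) -
        (pairedDiagonal fun m => Real.sqrt ((t m) ^ 2 - 1)).map Complex.ofReal *
          (C.map Complex.ofReal + (pairedDiagonal t).map Complex.ofReal)⁻¹ *
          (pairedDiagonal fun m => Real.sqrt ((t m) ^ 2 - 1)).map Complex.ofReal) := by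
    rw [mapC_sub, mapC_mul, mapC_mul, hinv]
    abel
  rw [heq]
  exact hSchur
end

section
/- Fix k ≥ 1. Let ω be the 2×2 real matrix with rows (0,1) and (−1,0), and let Ω be the 2k×2k block-diagonal matrix with k copies of ω. Let C be a 2k×2k real symmetric matrix such that the complex Hermitian matrix C − i·Ω is positive semidefinite. Let t : Fin k → ℝ with t(m) < −1 for all m, let T be the paired diagonal matrix diag(t₁,t₁,…,t_k,t_k), let √(T²−1) be the paired diagonal matrix with entries √(t(m)² − 1), and assume −(C + T) is positive definite. Then the matrix C' = T − √(T²−1)·(C + T)⁻¹·√(T²−1) satisfies that the complex Hermitian matrix C' − i·Ω is positive semidefinite. -/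
open scoped ComplexOrder

namespace Stmt7Aux

open Matrix

variable {n : Type*} [Fintype n] [DecidableEq n]

/-- A real positive definite matrix casts to a complex positive definite matrix. -/
lemma posDef_map_ofReal {A : Matrix n n ℝ} (hA : A.PosDef) :
    (A.map Complex.ofReal).PosDef := by
  classical
  open scoped MatrixOrder in
  set B := CFC.sqrt A with hBdef
  open scoped MatrixOrder in
  have hBB : B * B = A := CFC.sqrt_mul_sqrt_self A hA.posSemidef.nonneg
  open scoped MatrixOrder in
  have hBH : Bᴴ = B := (CFC.sqrt_nonneg A).posSemidef.isHermitian
  set Bc : Matrix n n ℂ := B.map Complex.ofReal with hBc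
  have hBcH : Bcᴴ = Bc := by
    ext i j
    simp only [hBc, conjTranspose_apply, Matrix.map_apply, Complex.conj_ofReal, RCLike.star_def]
    exact congrArg Complex.ofReal (congrFun (congrFun hBH i) j)
  have hmap : A.map Complex.ofReal = Bcᴴ * Bc := by
    rw [hBcH, hBc, ← hBB]
    exact Matrix.map_mul (f := Complex.ofRealHom)
  -- `Bc` is invertible
  have hdetB : B.det ≠ 0 := by
    have hApos : 0 < A.det := hA.det_pos
    have : B.det * B.det = A.det := by rw [← Matrix.det_mul, hBB]
    intro h
    rw [h, mul_zero] at this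
    exact hApos.ne' this.symm
  have hBcUnit : IsUnit Bc := by
    rw [Matrix.isUnit_iff_isUnit_det]
    have : Bc.det = Complex.ofReal B.det := (RingHom.map_det Complex.ofRealHom B).symm
    rw [this]
    exact (Complex.ofReal_ne_zero.mpr hdetB).isUnit
  refine PosDef.of_dotProduct_mulVec_pos ?_ ?_
  · rw [hmap]
    exact (posSemidef_conjTranspose_mul_self Bc).isHermitian
  · intro x hx
    rw [hmap, ← mulVec_mulVec, dotProduct_mulVec, vecMul_conjTranspose, star_star]
    refine dotProduct_star_self_pos_iff.mpr ?_
    intro h0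
    exact hx <| (mulVec_injective_iff_isUnit.mpr hBcUnit) (by rw [h0, mulVec_zero])

/-- A paired diagonal matrix commutes with the symplectic form. -/
lemma diag_comm_Omega {k : ℕ} (v : Fin k → ℂ) :
    Matrix.diagonal (fun p : Fin 2 × Fin k => v p.2) * (OmegaMat k).map Complex.ofReal
      = (OmegaMat k).map Complex.ofReal * Matrix.diagonal (fun p : Fin 2 × Fin k => v p.2) := by
  ext ⟨i, m⟩ ⟨j, n⟩
  simp only [Matrix.diagonal_mul, Matrix.mul_diagonal, Matrix.map_apply, OmegaMat,
    Matrix.blockDiagonal_apply]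
  rcases eq_or_ne m n with h | h
  · subst h; ring
  · simp [h]

lemma omega_sq_real {k : ℕ} : OmegaMat k * OmegaMat k = -1 := by
  rw [OmegaMat, ← Matrix.blockDiagonal_mul]
  have h : omegaMat * omegaMat = -1 := by
    ext i j
    fin_cases i <;> fin_cases j <;>
      simp [omegaMat, Matrix.mul_apply, Fin.sum_univ_two, Matrix.one_apply]
  rw [show (fun _ : Fin k => omegaMat * omegaMat) = fun _ : Fin k => (-1 : Matrix (Fin 2) (Fin 2) ℝ) from funext fun _ => h]
  rw [show (fun _ : Fin k => (-1 : Matrix (Fin 2) (Fin 2) ℝ)) = -(1 : Fin k → Matrix (Fin 2) (Fin 2) ℝ) from rfl]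
  rw [Matrix.blockDiagonal_neg, Matrix.blockDiagonal_one]

lemma omega_sq {k : ℕ} :
    (OmegaMat k).map Complex.ofReal * (OmegaMat k).map Complex.ofReal = -1 := by
  have := (Matrix.map_mul (L := OmegaMat k) (M := OmegaMat k) (f := Complex.ofRealHom)).symm
  rw [show ((OmegaMat k).map (Complex.ofRealHom : ℝ → ℂ)) = (OmegaMat k).map Complex.ofReal from rfl] at this
  rw [this, omega_sq_real]
  ext i j
  by_cases h : i = j <;> simp [Matrix.map_apply, Matrix.one_apply, h]

lemma map_mul_ofReal (A B : Matrix n n ℝ) :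
    (A * B).map Complex.ofReal = A.map Complex.ofReal * B.map Complex.ofReal :=
  Matrix.map_mul (f := Complex.ofRealHom)

lemma map_one_ofReal : (1 : Matrix n n ℝ).map Complex.ofReal = 1 := by
  ext i j
  by_cases h : i = j <;> simp [Matrix.map_apply, Matrix.one_apply, h]

end Stmt7Aux

set_option maxHeartbeats 1000000 in
theorem stmt_7 (k : ℕ) (hk : 1 ≤ k)
    (C : Matrix (Fin 2 × Fin k) (Fin 2 × Fin k) ℝ) (hCsymm : C.IsSymm)
    (hC : UncertaintyOK C)
    (t : Fin k → ℝ) (ht : ∀ m, t m < -1)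
    (hCT : (-(C + pairedDiagonal t)).PosDef) :
    UncertaintyOK
      (pairedDiagonal t -
        pairedDiagonal (fun m => Real.sqrt ((t m) ^ 2 - 1)) *
          (C + pairedDiagonal t)⁻¹ *
          pairedDiagonal (fun m => Real.sqrt ((t m) ^ 2 - 1))) := by
  classical
  open Matrix Stmt7Aux in
  show ((pairedDiagonal t -
        pairedDiagonal (fun m => Real.sqrt ((t m) ^ 2 - 1)) *
          (C + pairedDiagonal t)⁻¹ *
          pairedDiagonal (fun m => Real.sqrt ((t m) ^ 2 - 1))).map Complex.ofReal
      - Complex.I • (OmegaMat k).map Complex.ofReal).PosSemidef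
  have hC' : (C.map Complex.ofReal
      - Complex.I • (OmegaMat k).map Complex.ofReal).PosSemidef := hC
  set Ωc : Matrix (Fin 2 × Fin k) (Fin 2 × Fin k) ℂ := (OmegaMat k).map Complex.ofReal with hΩc
  set Cc : Matrix (Fin 2 × Fin k) (Fin 2 × Fin k) ℂ := C.map Complex.ofReal with hCc
  set Tc : Matrix (Fin 2 × Fin k) (Fin 2 × Fin k) ℂ :=
    Matrix.diagonal (fun p : Fin 2 × Fin k => (t p.2 : ℂ)) with hTcdef
  set Dc : Matrix (Fin 2 × Fin k) (Fin 2 × Fin k) ℂ :=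
    Matrix.diagonal (fun p : Fin 2 × Fin k => ((Real.sqrt (t p.2 ^ 2 - 1) : ℝ) : ℂ)) with hDcdef
  set X : Matrix (Fin 2 × Fin k) (Fin 2 × Fin k) ℂ := Cc - Complex.I • Ωc with hXdef
  set S : Matrix (Fin 2 × Fin k) (Fin 2 × Fin k) ℂ := Cc + Tc with hSdef
  set M : Matrix (Fin 2 × Fin k) (Fin 2 × Fin k) ℂ := -(Tc + Complex.I • Ωc) with hMdef
  set N : Matrix (Fin 2 × Fin k) (Fin 2 × Fin k) ℂ := -S with hNdef
  have hX : X.PosSemidef := hC'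
  -- map lemmas
  have hTmap : (pairedDiagonal t).map Complex.ofReal = Tc := by
    rw [pairedDiagonal, Matrix.diagonal_map (by simp)]
  have hDmap : (pairedDiagonal (fun m => Real.sqrt ((t m) ^ 2 - 1))).map Complex.ofReal = Dc := by
    rw [pairedDiagonal, Matrix.diagonal_map (by simp)]
  have hSmap : (C + pairedDiagonal t).map Complex.ofReal = S := by
    rw [Matrix.map_add Complex.ofReal (fun a b => Complex.ofReal_add a b), hTmap, hSdef, hCc]
  have hNmap : (-(C + pairedDiagonal t)).map Complex.ofReal = N := by
    rw [show (-(C + pairedDiagonal t)) = (0 : Matrix _ _ ℝ) - (C + pairedDiagonal t) by abel,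
      Matrix.map_sub Complex.ofReal (fun a b => Complex.ofReal_sub a b),
      Matrix.map_zero Complex.ofReal Complex.ofReal_zero, hSmap, hNdef, zero_sub]
  -- positive definiteness
  have hN : N.PosDef := hNmap ▸ Stmt7Aux.posDef_map_ofReal hCT
  have hMN : M = N + X := by
    rw [hMdef, hNdef, hXdef, hSdef]
    abel
  have hM : M.PosDef := hMN ▸ hN.add_posSemidef hX
  have hNdu : IsUnit N.det := (Matrix.isUnit_iff_isUnit_det N).mp hN.isUnit
  have hMdu : IsUnit M.det := (Matrix.isUnit_iff_isUnit_det M).mp hM.isUnit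
  have hNN : N * N⁻¹ = 1 := Matrix.mul_nonsing_inv N hNdu
  have hN'N : N⁻¹ * N = 1 := Matrix.nonsing_inv_mul N hNdu
  have hMM : M * M⁻¹ = 1 := Matrix.mul_nonsing_inv M hMdu
  have hM'M : M⁻¹ * M = 1 := Matrix.nonsing_inv_mul M hMdu
  -- the real inverse maps to the complex inverse
  have hCTu : IsUnit (C + pairedDiagonal t) := by
    have h := hCT.isUnit.neg; rwa [neg_neg] at h
  have hCTdu : IsUnit (C + pairedDiagonal t).det := (Matrix.isUnit_iff_isUnit_det _).mp hCTu
  have hRinv : (C + pairedDiagonal t) * (C + pairedDiagonal t)⁻¹ = 1 :=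
    Matrix.mul_nonsing_inv _ hCTdu
  have hSIinv : S * ((C + pairedDiagonal t)⁻¹).map Complex.ofReal = 1 := by
    have h2 := congrArg (fun A : Matrix (Fin 2 × Fin k) (Fin 2 × Fin k) ℝ =>
      A.map Complex.ofReal) hRinv
    simp only [Stmt7Aux.map_mul_ofReal, Stmt7Aux.map_one_ofReal] at h2
    rwa [hSmap] at h2
  have hSinv : ((C + pairedDiagonal t)⁻¹).map Complex.ofReal = S⁻¹ :=
    (Matrix.inv_eq_right_inv hSIinv).symm
  have hSS : S * S⁻¹ = 1 := by rw [← hSinv]; exact hSIinv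
  have hNinv : N⁻¹ = -S⁻¹ := Matrix.inv_eq_right_inv (by rw [hNdef, neg_mul_neg]; exact hSS)
  -- commutation relations
  have hTΩ : Tc * Ωc = Ωc * Tc := by
    rw [hTcdef, hΩc]; exact Stmt7Aux.diag_comm_Omega (fun m => (t m : ℂ))
  have hDΩ : Dc * Ωc = Ωc * Dc := by
    rw [hDcdef, hΩc]
    exact Stmt7Aux.diag_comm_Omega (fun m => ((Real.sqrt (t m ^ 2 - 1) : ℝ) : ℂ))
  have hDT : Dc * Tc = Tc * Dc := by
    rw [hDcdef, hTcdef, Matrix.diagonal_mul_diagonal, Matrix.diagonal_mul_diagonal]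
    exact congrArg Matrix.diagonal (funext fun p => mul_comm _ _)
  have hΩΩ : Ωc * Ωc = -1 := by rw [hΩc]; exact Stmt7Aux.omega_sq
  have hDD : Dc * Dc = Tc * Tc - 1 := by
    rw [hDcdef, hTcdef, Matrix.diagonal_mul_diagonal, Matrix.diagonal_mul_diagonal,
      ← Matrix.diagonal_one, Matrix.diagonal_sub]
    refine congrArg Matrix.diagonal (funext fun p => ?_)
    have h1 : (1 : ℝ) ≤ t p.2 ^ 2 := by nlinarith [ht p.2]
    rw [← Complex.ofReal_mul, Real.mul_self_sqrt (by linarith)]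
    push_cast; ring
  have hMT : M * (Tc - Complex.I • Ωc) = -(Dc * Dc) := by
    rw [hDD, hMdef, neg_mul]
    congr 1
    simp only [add_mul, mul_sub, mul_smul_comm, smul_mul_assoc, smul_smul,
      Complex.I_mul_I, hΩΩ, hTΩ, neg_smul, one_smul, smul_neg, neg_neg, smul_add]
    module
  have hDM : Dc * M = M * Dc := by
    rw [hMdef]
    simp only [mul_neg, neg_mul, mul_add, add_mul, mul_smul_comm, smul_mul_assoc, hDT, hDΩ]
  have hDMinv : Dc * M⁻¹ = M⁻¹ * Dc := by
    calc Dc * M⁻¹ = 1 * (Dc * M⁻¹) := (one_mul _).symm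
      _ = M⁻¹ * M * (Dc * M⁻¹) := by rw [hM'M]
      _ = M⁻¹ * (M * Dc) * M⁻¹ := by simp only [mul_assoc]
      _ = M⁻¹ * (Dc * M) * M⁻¹ := by rw [hDM]
      _ = M⁻¹ * Dc * (M * M⁻¹) := by simp only [mul_assoc]
      _ = M⁻¹ * Dc := by rw [hMM, mul_one]
  have hDcDc_eq : Dc * Dc = -(M * (Tc - Complex.I • Ωc)) := by rw [hMT, neg_neg]
  have hDMD : Dc * M⁻¹ * Dc = -(Tc - Complex.I • Ωc) := by
    rw [hDMinv, mul_assoc, hDcDc_eq, mul_neg, ← mul_assoc, hM'M, one_mul]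
  -- resolvent identity
  have hXMN : X = M - N := by rw [hMN]; abel
  have cM : ∀ Z : Matrix (Fin 2 × Fin k) (Fin 2 × Fin k) ℂ, M⁻¹ * (M * Z) = Z :=
    fun Z => by rw [← mul_assoc, hM'M, one_mul]
  have cM' : ∀ Z : Matrix (Fin 2 × Fin k) (Fin 2 × Fin k) ℂ, M * (M⁻¹ * Z) = Z :=
    fun Z => by rw [← mul_assoc, hMM, one_mul]
  have cN : ∀ Z : Matrix (Fin 2 × Fin k) (Fin 2 × Fin k) ℂ, N⁻¹ * (N * Z) = Z :=
    fun Z => by rw [← mul_assoc, hN'N, one_mul]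
  have cN' : ∀ Z : Matrix (Fin 2 × Fin k) (Fin 2 × Fin k) ℂ, N * (N⁻¹ * Z) = Z :=
    fun Z => by rw [← mul_assoc, hNN, one_mul]
  have hres : N⁻¹ - M⁻¹ = M⁻¹ * X * M⁻¹ + M⁻¹ * (X * N⁻¹ * X) * M⁻¹ := by
    rw [hXMN]
    simp only [sub_mul, mul_sub, mul_assoc, cM, cM', cN, cN', hNN, hN'N, hMM, hM'M,
      mul_one, one_mul]
    abel
  -- Hermitian bookkeeping
  have hXh : Xᴴ = X := hX.isHermitian
  have hMinvH : (M⁻¹)ᴴ = M⁻¹ := hM.inv.isHermitian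
  have hDcH : Dcᴴ = Dc := by
    rw [hDcdef, Matrix.diagonal_conjTranspose]
    refine congrArg Matrix.diagonal (funext fun p => ?_)
    exact Complex.conj_ofReal _
  have hNinvPSD : N⁻¹.PosSemidef := hN.inv.posSemidef
  have t1 : ((M⁻¹ * Dc)ᴴ * X * (M⁻¹ * Dc)).PosSemidef := hX.conjTranspose_mul_mul_same _
  have hXNX : (X * N⁻¹ * X).PosSemidef := by
    have h := hNinvPSD.conjTranspose_mul_mul_same X
    rwa [hXh] at h
  have t2 : ((M⁻¹ * Dc)ᴴ * (X * N⁻¹ * X) * (M⁻¹ * Dc)).PosSemidef :=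
    hXNX.conjTranspose_mul_mul_same _
  have hBH : (M⁻¹ * Dc)ᴴ = Dc * M⁻¹ := by rw [Matrix.conjTranspose_mul, hDcH, hMinvH]
  -- final assembly
  have hGmap : (pairedDiagonal t -
      pairedDiagonal (fun m => Real.sqrt ((t m) ^ 2 - 1)) *
        (C + pairedDiagonal t)⁻¹ *
        pairedDiagonal (fun m => Real.sqrt ((t m) ^ 2 - 1))).map Complex.ofReal
      = Tc - Dc * S⁻¹ * Dc := by
    rw [Matrix.map_sub Complex.ofReal (fun a b => Complex.ofReal_sub a b),
      Stmt7Aux.map_mul_ofReal, Stmt7Aux.map_mul_ofReal, hTmap, hDmap, hSinv]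
  have hGoal : Tc - Dc * S⁻¹ * Dc - Complex.I • Ωc
      = (M⁻¹ * Dc)ᴴ * X * (M⁻¹ * Dc) + (M⁻¹ * Dc)ᴴ * (X * N⁻¹ * X) * (M⁻¹ * Dc) := by
    rw [hBH]
    have lhs_eq : Tc - Dc * S⁻¹ * Dc - Complex.I • Ωc = Dc * (N⁻¹ - M⁻¹) * Dc := by
      rw [mul_sub, sub_mul, hDMD, hNinv]
      simp only [mul_neg, neg_mul]
      abel
    rw [lhs_eq, hres]
    simp only [mul_add, add_mul, mul_assoc]
  rw [hGmap, hGoal]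
  exact t1.add t2
end

section
/- Fix k ≥ 1 and t : Fin k → ℝ with t(m)² > 1 for all m. Over ℂ, let ω be the 2×2 matrix with rows (0,1) and (−1,0), let Ω be the 2k×2k block-diagonal matrix with k copies of ω, let T be the paired diagonal matrix diag(t₁,t₁,…,t_k,t_k), and let √(T²−1) be the paired diagonal matrix with entries √(t(m)² − 1). Then T + i·Ω is invertible and T − √(T²−1)·(T + i·Ω)⁻¹·√(T²−1) = i·Ω. -/
/-- The paired diagonal complex matrix `diag(u₁,u₁,…,u_k,u_k)` built from a real
function `u`, with the `2k` indices represented as `Fin 2 × Fin k`. -/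
noncomputable def pairedDiagonalC {k : ℕ} (u : Fin k → ℝ) :
    Matrix (Fin 2 × Fin k) (Fin 2 × Fin k) ℂ :=
  Matrix.diagonal fun p => (u p.2 : ℂ)

/-- The single-mode symplectic form `ω = [[0,1],[−1,0]]` over `ℂ`. -/
def omegaMatC : Matrix (Fin 2) (Fin 2) ℂ := !![0, 1; -1, 0]

/-- The `2k × 2k` block-diagonal symplectic form `Ω` built from `k` copies of `ω`,
over `ℂ`. -/
def OmegaMatC (k : ℕ) : Matrix (Fin 2 × Fin k) (Fin 2 × Fin k) ℂ :=
  Matrix.blockDiagonal fun _ : Fin k => omegaMatC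


noncomputable def pdC {k : ℕ} (d : Fin k → ℂ) :
    Matrix (Fin 2 × Fin k) (Fin 2 × Fin k) ℂ :=
  Matrix.diagonal fun p => d p.2

lemma pdC_ext {k : ℕ} {f g : Fin k → ℂ} (h : ∀ m, f m = g m) : pdC f = pdC g :=
  congrArg Matrix.diagonal (funext fun p => h p.2)

lemma pdC_one {k : ℕ} : pdC (fun _ : Fin k => (1 : ℂ)) = 1 := by
  simp [pdC]

lemma pdC_mul_pdC {k : ℕ} (d e : Fin k → ℂ) :
    pdC d * pdC e = pdC (fun m => d m * e m) := by
  simp [pdC, Matrix.diagonal_mul_diagonal]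

lemma pdC_comm_Omega {k : ℕ} (d : Fin k → ℂ) :
    pdC d * OmegaMatC k = OmegaMatC k * pdC d := by
  ext ⟨i, m⟩ ⟨j, n⟩
  simp only [pdC, OmegaMatC, Matrix.diagonal_mul, Matrix.mul_diagonal,
    Matrix.blockDiagonal_apply]
  by_cases h : m = n
  · subst h; simp [mul_comm]
  · simp [h]

lemma Omega_sq {k : ℕ} : OmegaMatC k * OmegaMatC k = -1 := by
  have hω : omegaMatC * omegaMatC = -1 := by
    ext i j
    fin_cases i <;> fin_cases j <;>
      simp [omegaMatC, Matrix.mul_apply, Fin.sum_univ_two, Matrix.one_apply]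
  rw [OmegaMatC, ← Matrix.blockDiagonal_mul]
  simp only [hω]
  have h2 : (fun _ : Fin k => (-1 : Matrix (Fin 2) (Fin 2) ℂ)) =
      -(fun _ : Fin k => (1 : Matrix (Fin 2) (Fin 2) ℂ)) := rfl
  rw [h2, Matrix.blockDiagonal_neg]
  exact congrArg Neg.neg Matrix.blockDiagonal_one

theorem stmt_8 (k : ℕ) (hk : 1 ≤ k) (t : Fin k → ℝ) (ht : ∀ m, 1 < (t m) ^ 2) :
    IsUnit (pairedDiagonalC t + Complex.I • OmegaMatC k) ∧
      pairedDiagonalC t -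
        pairedDiagonalC (fun m => Real.sqrt ((t m) ^ 2 - 1)) *
          (pairedDiagonalC t + Complex.I • OmegaMatC k)⁻¹ *
          pairedDiagonalC (fun m => Real.sqrt ((t m) ^ 2 - 1)) =
        Complex.I • OmegaMatC k := by
  classical
  set d : Fin k → ℂ := fun m => (t m : ℂ) with hd
  set s : Fin k → ℂ := fun m => (Real.sqrt ((t m) ^ 2 - 1) : ℂ) with hs
  set e : Fin k → ℂ := fun m => ((t m : ℂ) ^ 2 - 1) with he
  set eInv : Fin k → ℂ := fun m => (((t m : ℂ) ^ 2 - 1))⁻¹ with heInv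
  have hT : pairedDiagonalC t = pdC d := rfl
  have hS : pairedDiagonalC (fun m => Real.sqrt ((t m) ^ 2 - 1)) = pdC s := rfl
  have he0 : ∀ m, e m ≠ 0 := by
    intro m
    have h1 : ((t m) ^ 2 - 1 : ℝ) ≠ 0 := by nlinarith [ht m]
    have : (((t m) ^ 2 - 1 : ℝ) : ℂ) ≠ 0 := Complex.ofReal_ne_zero.mpr h1
    simpa [he] using this
  have hss : pdC s * pdC s = pdC e := by
    rw [pdC_mul_pdC]
    refine pdC_ext fun m => ?_
    have h0 : (0:ℝ) ≤ (t m) ^ 2 - 1 := by nlinarith [ht m]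
    simp only [hs, he]
    rw [← Complex.ofReal_mul, Real.mul_self_sqrt h0]
    push_cast; ring
  have heeInv : pdC e * pdC eInv = 1 := by
    rw [pdC_mul_pdC, pdC_ext (fun m => mul_inv_cancel₀ (he0 m)), pdC_one]
  set Ω := OmegaMatC k
  set A := pdC d + Complex.I • Ω with hA
  set B := pdC d - Complex.I • Ω with hB
  have hcomm : ∀ f : Fin k → ℂ, pdC f * (Complex.I • Ω) = (Complex.I • Ω) * pdC f := by
    intro f
    rw [Matrix.mul_smul, Matrix.smul_mul, pdC_comm_Omega]
  have hΩ2 : (Complex.I • Ω) * (Complex.I • Ω) = 1 := by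
    rw [Matrix.smul_mul, Matrix.mul_smul, smul_smul, Complex.I_mul_I, Omega_sq]
    simp
  have hdd : pdC d * pdC d - 1 = pdC e := by
    rw [pdC_mul_pdC, ← pdC_one]
    unfold pdC
    rw [Matrix.diagonal_sub]
    exact congrArg Matrix.diagonal (funext fun p => by simp only [he, Pi.sub_apply]; ring)
  have hAB : A * B = pdC e := by
    rw [hA, hB, mul_sub, add_mul, add_mul, hΩ2, hcomm, ← hdd]
    abel
  have hBA : B * A = pdC e := by
    rw [hA, hB, mul_add, sub_mul, sub_mul, hΩ2, hcomm, ← hdd]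
    abel
  have hAC : A * (B * pdC eInv) = 1 := by
    rw [← mul_assoc, hAB, heeInv]
  have hCA : (B * pdC eInv) * A = 1 := by
    have hcomm2 : pdC eInv * A = A * pdC eInv := by
      rw [hA, mul_add, add_mul, pdC_mul_pdC, pdC_mul_pdC, hcomm,
        pdC_ext (fun m => mul_comm (eInv m) (d m))]
    rw [mul_assoc, hcomm2, ← mul_assoc, hBA, heeInv]
  have hUnit : IsUnit A := ⟨⟨A, B * pdC eInv, hAC, hCA⟩, rfl⟩
  have hAinv : A⁻¹ = B * pdC eInv := Matrix.inv_eq_right_inv hAC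
  refine ⟨hUnit, ?_⟩
  rw [hT, hS, hAinv]
  have hsB : pdC s * B = B * pdC s := by
    rw [hB, mul_sub, sub_mul, hcomm, pdC_mul_pdC, pdC_mul_pdC,
      pdC_ext (fun m => mul_comm (s m) (d m))]
  have hse : pdC eInv * pdC s = pdC s * pdC eInv := by
    rw [pdC_mul_pdC, pdC_mul_pdC, pdC_ext (fun m => mul_comm (eInv m) (s m))]
  calc pdC d - pdC s * (B * pdC eInv) * pdC s
      = pdC d - pdC s * B * (pdC eInv * pdC s) := by rw [mul_assoc, mul_assoc, mul_assoc]
    _ = pdC d - B * (pdC s * pdC s * pdC eInv) := by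
        rw [hse, hsB, mul_assoc, mul_assoc]
    _ = pdC d - B := by rw [hss, heeInv, mul_one]
    _ = Complex.I • Ω := by rw [hB]; abel
end

section
/- Fix k ≥ 1 and a : Fin k → ℝ with a(m) > 1 for all m. Let ω be the 2×2 real matrix with rows (0,1) and (−1,0), let z be the 2×2 real matrix with rows (1,0) and (0,−1), and let Ω and Z be the 2k×2k block-diagonal matrices with k copies of ω and of z. Let D be the paired diagonal matrix diag(a₁,a₁,…,a_k,a_k) and let E be the paired diagonal matrix with entries 1/√(a(m)² − 1). If B is a 2k×2k real matrix satisfying B·Ω·Bᵀ = −(D·D − 1)·Ω, then the matrix M = E·Z·B satisfies M·Ω·Mᵀ = Ω, i.e., M is symplectic. -/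
open Matrix

/-- The matrix `z = [[1,0],[0,−1]]`. -/
def zMat : Matrix (Fin 2) (Fin 2) ℝ := !![1, 0; 0, -1]

/-- The `2k × 2k` block-diagonal matrix `Z` built from `k` copies of `z`. -/
def ZMat (k : ℕ) : Matrix (Fin 2 × Fin k) (Fin 2 × Fin k) ℝ :=
  Matrix.blockDiagonal fun _ : Fin k => zMat

lemma pd_block {k : ℕ} (u : Fin k → ℝ) :
    pairedDiagonal u
      = Matrix.blockDiagonal (fun m : Fin k => Matrix.diagonal (fun _ : Fin 2 => u m)) := by
  ext ⟨i, m⟩ ⟨j, n⟩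
  simp [pairedDiagonal, Matrix.blockDiagonal_apply, Matrix.diagonal_apply, Prod.ext_iff]
  aesop

lemma block_eq {k : ℕ} (a : Fin k → ℝ) (ha : ∀ m, 1 < a m) (m : Fin k) :
    -(Matrix.diagonal (fun _ : Fin 2 => 1 / Real.sqrt ((a m) ^ 2 - 1)) * zMat *
        ((Matrix.diagonal (fun _ : Fin 2 => a m) * Matrix.diagonal (fun _ : Fin 2 => a m) - 1)
          * omegaMat) * zMat *
        Matrix.diagonal (fun _ : Fin 2 => 1 / Real.sqrt ((a m) ^ 2 - 1)))
      = omegaMat := by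
  have h1 : (0:ℝ) < (a m) ^ 2 - 1 := by nlinarith [ha m]
  have hs : Real.sqrt ((a m) ^ 2 - 1) ^ 2 = (a m) ^ 2 - 1 := Real.sq_sqrt h1.le
  have hsne : Real.sqrt ((a m) ^ 2 - 1) ≠ 0 := by positivity
  ext i j
  fin_cases i <;> fin_cases j <;>
    simp [zMat, omegaMat, Matrix.mul_apply, Matrix.diagonal, Fin.sum_univ_two] <;>
    (field_simp; nlinarith [hs])

theorem stmt_10 (k : ℕ) (hk : 1 ≤ k) (a : Fin k → ℝ) (ha : ∀ m, 1 < a m)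
    (B : Matrix (Fin 2 × Fin k) (Fin 2 × Fin k) ℝ)
    (hB : B * OmegaMat k * Bᵀ =
      -((pairedDiagonal a * pairedDiagonal a - 1) * OmegaMat k)) :
    (pairedDiagonal (fun m => 1 / Real.sqrt ((a m) ^ 2 - 1)) * ZMat k * B) *
        OmegaMat k *
        (pairedDiagonal (fun m => 1 / Real.sqrt ((a m) ^ 2 - 1)) * ZMat k * B)ᵀ =
      OmegaMat k := by
  set e : Fin k → ℝ := fun m => 1 / Real.sqrt ((a m) ^ 2 - 1) with he
  have hzt : zMatᵀ = zMat := by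
    ext i j; fin_cases i <;> fin_cases j <;> simp [zMat]
  have hZt : (ZMat k)ᵀ = ZMat k := by
    rw [ZMat, Matrix.blockDiagonal_transpose, hzt]
  have hEt : (pairedDiagonal e)ᵀ = pairedDiagonal e := Matrix.diagonal_transpose _
  have key : pairedDiagonal e * ZMat k * (B * OmegaMat k * Bᵀ) * ZMat k * pairedDiagonal e
      = OmegaMat k := by
    rw [hB, pd_block e, pd_block a, ZMat, OmegaMat]
    simp only [← Matrix.blockDiagonal_one, ← Matrix.blockDiagonal_mul,
      ← Matrix.blockDiagonal_sub, ← Matrix.blockDiagonal_neg, he]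
    refine congrArg _ (funext fun m => ?_)
    simp only [Pi.neg_apply, Pi.sub_apply, Pi.mul_apply, Pi.one_apply, mul_neg, neg_mul]
    exact block_eq a ha m
  calc (pairedDiagonal e * ZMat k * B) * OmegaMat k * (pairedDiagonal e * ZMat k * B)ᵀ
      = pairedDiagonal e * ZMat k * (B * OmegaMat k * Bᵀ) * ZMat k * pairedDiagonal e := by
        rw [Matrix.transpose_mul, Matrix.transpose_mul, hZt, hEt]
        simp only [Matrix.mul_assoc]
    _ = OmegaMat k := key
end

section
/- Let s, s', c, c' be real numbers with s ≥ 1, 0 ≤ s' < s, c > 1, c' > 1. Define d = (c + s)/(s·c + 1) and d' = (c' + s')/(s'·c' + 1). Then it is not the case that both c' ≤ c and d' ≤ d. -/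
theorem stmt_15 (s s' c c' : ℝ) (hs : 1 ≤ s) (hs'0 : 0 ≤ s') (hs' : s' < s)
    (hc : 1 < c) (hc' : 1 < c')
    (d d' : ℝ) (hd : d = (c + s) / (s * c + 1)) (hd' : d' = (c' + s') / (s' * c' + 1)) :
    ¬ (c' ≤ c ∧ d' ≤ d) := by
  rintro ⟨hcc, hdd⟩
  have h1 : (0:ℝ) < s * c + 1 := by nlinarith
  have h2 : (0:ℝ) < s' * c' + 1 := by nlinarith
  rw [hd, hd', div_le_div_iff₀ h2 h1] at hdd
  nlinarith [mul_pos (sub_pos.2 hs') (mul_pos (show (0:ℝ) < c + 1 by linarith) (sub_pos.2 hc')),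
    mul_nonneg (mul_nonneg (sub_nonneg.2 hs) (show (0:ℝ) ≤ 1 + s' by linarith)) (sub_nonneg.2 hcc)]
end

section
/- Let c, d, βx, βp be real numbers with c ≥ d > 0 and c·d > 1 (so that c > 1). Define c̃ = (c − 1)/(c + 1), d̃ = (d − 1)/(d + 1), s̃₀ = d̃/c̃, β̃x = βx/(c + 1), β̃p = βp/(d + 1). Then (c − d)/(c·d − 1) = (1 − s̃₀)/(1 + s̃₀), and moreover 2·√((d+1)/(c+1))·βx/√(c·d − 1) = 2·√(2/(1 + s̃₀))·β̃x/√c̃ and 2·√((c+1)/(d+1))·βp/√(c·d − 1) = 2·√(2/(1 + s̃₀))·β̃p/√c̃. -/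
theorem stmt_16 (c d βx βp : ℝ) (hdc : d ≤ c) (hd : 0 < d) (hcd : 1 < c * d)
    (ctil dtil stil βxtil βptil : ℝ)
    (hctil : ctil = (c - 1) / (c + 1)) (hdtil : dtil = (d - 1) / (d + 1))
    (hstil : stil = dtil / ctil)
    (hβxtil : βxtil = βx / (c + 1)) (hβptil : βptil = βp / (d + 1)) :
    (c - d) / (c * d - 1) = (1 - stil) / (1 + stil) ∧
    2 * Real.sqrt ((d + 1) / (c + 1)) * βx / Real.sqrt (c * d - 1) =
      2 * Real.sqrt (2 / (1 + stil)) * βxtil / Real.sqrt ctil ∧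
    2 * Real.sqrt ((c + 1) / (d + 1)) * βp / Real.sqrt (c * d - 1) =
      2 * Real.sqrt (2 / (1 + stil)) * βptil / Real.sqrt ctil := by
  have hc1 : 1 < c := by nlinarith
  have hcp : (0:ℝ) < c + 1 := by linarith
  have hcm : (0:ℝ) < c - 1 := by linarith
  have hdp : (0:ℝ) < d + 1 := by linarith
  have hcd1 : (0:ℝ) < c * d - 1 := by linarith
  have hctilpos : 0 < ctil := by rw [hctil]; positivity
  have hstil' : stil = (d - 1) * (c + 1) / ((d + 1) * (c - 1)) := by
    rw [hstil, hdtil, hctil]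
    field_simp
  have h1s : 1 + stil = 2 * (c * d - 1) / ((d + 1) * (c - 1)) := by
    rw [hstil']; field_simp; ring
  have h1s' : 1 - stil = 2 * (c - d) / ((d + 1) * (c - 1)) := by
    rw [hstil']; field_simp; ring
  have h1spos : 0 < 1 + stil := by rw [h1s]; positivity
  have key : ∀ (u v : ℝ), 0 < u → 0 < v → u * v = (c + 1) * (d + 1) →
      Real.sqrt (u / v) / Real.sqrt (c * d - 1)
        = Real.sqrt (2 / (1 + stil)) / (v * Real.sqrt ctil) := by
    intro u v hu hv huv
    set A := Real.sqrt (u / v) / Real.sqrt (c * d - 1) with hA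
    set B := Real.sqrt (2 / (1 + stil)) / (v * Real.sqrt ctil) with hB
    have hApos : 0 ≤ A := by positivity
    have hBpos : 0 ≤ B := by positivity
    have hsq : A ^ 2 = B ^ 2 := by
      rw [hA, hB, div_pow, div_pow, mul_pow, Real.sq_sqrt (by positivity),
        Real.sq_sqrt hcd1.le, Real.sq_sqrt (by positivity : (0:ℝ) ≤ 2 / (1 + stil)),
        Real.sq_sqrt hctilpos.le, h1s, hctil]
      rw [div_eq_div_iff (by positivity) (by positivity)]
      field_simp
      linear_combination huv
    calc A = Real.sqrt (A ^ 2) := (Real.sqrt_sq hApos).symm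
      _ = Real.sqrt (B ^ 2) := by rw [hsq]
      _ = B := Real.sqrt_sq hBpos
  refine ⟨?_, ?_, ?_⟩
  · rw [h1s, h1s']
    field_simp
  · have h := key (d + 1) (c + 1) hdp hcp (by ring)
    calc 2 * Real.sqrt ((d + 1) / (c + 1)) * βx / Real.sqrt (c * d - 1)
        = 2 * βx * (Real.sqrt ((d + 1) / (c + 1)) / Real.sqrt (c * d - 1)) := by ring
      _ = 2 * βx * (Real.sqrt (2 / (1 + stil)) / ((c + 1) * Real.sqrt ctil)) := by rw [h]
      _ = 2 * Real.sqrt (2 / (1 + stil)) * βxtil / Real.sqrt ctil := by rw [hβxtil, div_mul_eq_div_div]; ring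
  · have h := key (c + 1) (d + 1) hcp hdp (by ring)
    calc 2 * Real.sqrt ((c + 1) / (d + 1)) * βp / Real.sqrt (c * d - 1)
        = 2 * βp * (Real.sqrt ((c + 1) / (d + 1)) / Real.sqrt (c * d - 1)) := by ring
      _ = 2 * βp * (Real.sqrt (2 / (1 + stil)) / ((d + 1) * Real.sqrt ctil)) := by rw [h]
      _ = 2 * Real.sqrt (2 / (1 + stil)) * βptil / Real.sqrt ctil := by rw [hβptil, div_mul_eq_div_div]; ring
end

section
/- Fix k ≥ 1. Let ω be the 2×2 real matrix with rows (0,1) and (−1,0), and let Ω be the 2k×2k block-diagonal matrix with k copies of ω. Let X be a 2k×2k real symmetric matrix such that the complex Hermitian matrix X − i·Ω is positive semidefinite and such that the real symmetric matrix 1 − X is positive semidefinite. Then X = 1. -/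
open scoped ComplexOrder

/-- Quadratic form of a real PSD matrix on a two-term combination of basis vectors. -/
lemma psd_quad {n : Type*} [Fintype n] [DecidableEq n]
    {A : Matrix n n ℝ} (hA : A.PosSemidef) (p q : n) (c d : ℝ) :
    0 ≤ c * c * A p p + c * d * A p q + d * c * A q p + d * d * A q q := by
  have h := hA.dotProduct_mulVec_nonneg (Pi.single p c + Pi.single q d)
  simp [Matrix.mulVec_add, Matrix.mulVec_single, add_dotProduct,
    single_dotProduct, star_trivial] at h
  nlinarith [h]

/-- The uncertainty relation forces each mode's diagonal pair to sum to at least `2`. -/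
lemma unc_diag (k : ℕ) (X : Matrix (Fin 2 × Fin k) (Fin 2 × Fin k) ℝ)
    (hXsymm : X.IsSymm)
    (hunc : (X.map (Complex.ofReal) -
      Complex.I • (OmegaMat k).map (Complex.ofReal)).PosSemidef) (j : Fin k) :
    2 ≤ X (0, j) (0, j) + X (1, j) (1, j) := by
  set M := X.map (Complex.ofReal) - Complex.I • (OmegaMat k).map (Complex.ofReal) with hM
  have h := hunc.dotProduct_mulVec_nonneg (Pi.single ((0 : Fin 2), j) 1 + Pi.single ((1 : Fin 2), j) (-Complex.I))
  have hstar : star ((Pi.single ((0 : Fin 2), j) (1:ℂ) : Fin 2 × Fin k → ℂ) + Pi.single ((1 : Fin 2), j) (-Complex.I))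
      = (Pi.single ((0 : Fin 2), j) (1:ℂ) : Fin 2 × Fin k → ℂ) + Pi.single ((1 : Fin 2), j) Complex.I := by
    funext p
    simp only [Pi.star_apply, Pi.add_apply, Pi.single_apply]
    split_ifs <;> simp_all
  rw [hstar] at h
  have hb : X ((1:Fin 2), j) ((0:Fin 2), j) = X ((0:Fin 2), j) ((1:Fin 2), j) :=
    (congrFun (congrFun hXsymm _) _).symm.trans rfl
  have hO00 : OmegaMat k ((0:Fin 2), j) ((0:Fin 2), j) = 0 := by
    simp [OmegaMat, Matrix.blockDiagonal_apply, omegaMat]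
  have hO01 : OmegaMat k ((0:Fin 2), j) ((1:Fin 2), j) = 1 := by
    simp [OmegaMat, Matrix.blockDiagonal_apply, omegaMat]
  have hO10 : OmegaMat k ((1:Fin 2), j) ((0:Fin 2), j) = -1 := by
    simp [OmegaMat, Matrix.blockDiagonal_apply, omegaMat]
  have hO11 : OmegaMat k ((1:Fin 2), j) ((1:Fin 2), j) = 0 := by
    simp [OmegaMat, Matrix.blockDiagonal_apply, omegaMat]
  simp only [Matrix.mulVec_add, Matrix.mulVec_single, add_dotProduct,
    single_dotProduct, Pi.add_apply, hM, Matrix.sub_apply, Matrix.map_apply,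
    Matrix.smul_apply, hO00, hO01, hO10, hO11, hb, smul_eq_mul] at h
  rw [Complex.nonneg_iff] at h
  obtain ⟨hre, -⟩ := h
  simp [Complex.add_re, Complex.mul_re] at hre
  linarith [hre]

theorem stmt_18 (k : ℕ) (hk : 1 ≤ k)
    (X : Matrix (Fin 2 × Fin k) (Fin 2 × Fin k) ℝ) (hXsymm : X.IsSymm)
    (hunc : (X.map (Complex.ofReal) -
      Complex.I • (OmegaMat k).map (Complex.ofReal)).PosSemidef)
    (hdom : (1 - X).PosSemidef) :
    X = 1 := by
  have hdiag_le : ∀ p, X p p ≤ 1 := by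
    intro p
    have h := psd_quad hdom p p 1 0
    simp [Matrix.sub_apply, Matrix.one_apply_eq] at h
    linarith
  have hdiag : ∀ p, X p p = 1 := by
    rintro ⟨i, j⟩
    have h2 := unc_diag k X hXsymm hunc j
    have h0 := hdiag_le ((0 : Fin 2), j)
    have h1 := hdiag_le ((1 : Fin 2), j)
    fin_cases i
    · show X ((0 : Fin 2), j) ((0 : Fin 2), j) = 1
      linarith
    · show X ((1 : Fin 2), j) ((1 : Fin 2), j) = 1
      linarith
  have hA : ∀ p q, (1 - X) p q = 0 := by
    intro p q
    have hs : (1 - X) q p = (1 - X) p q := by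
      have := congrFun (congrFun hdom.1 p) q
      simpa [Matrix.conjTranspose_apply] using this
    have hp : (1 - X) p p = 0 := by
      simp [Matrix.sub_apply, Matrix.one_apply_eq, hdiag p]
    have hq : (1 - X) q q = 0 := by
      simp [Matrix.sub_apply, Matrix.one_apply_eq, hdiag q]
    have h1 := psd_quad hdom p q 1 1
    have h2 := psd_quad hdom p q 1 (-1)
    linarith
  have hz : (1 - X) = 0 := by
    ext p q
    exact hA p q
  have := sub_eq_zero.mp hz
  exact this.symm
end
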